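/- arXiv:2310.06863 — 5 statements merged into one kernel-verified Lean document; each statement's English description precedes it below -/
import Mathlib

section
/- Let ρ₁,ρ₂>0, φ₁,φ₂∈(0,1), R>0 and a,b>0 satisfy Ξ := R/(Γ(φ₁+1)Γ(φ₂+1)) · (a^{ρ₁}/ρ₁)^{φ₁} (b^{ρ₂}/ρ₂)^{φ₂} < 1. Suppose F : [0,a]×[0,b]×ℝ → ℝ is continuous and satisfies |F(x,y,u) − F(x,y,v)| ≤ R|u−v| for all x,y,u,v, and h : [0,a]×[0,b] → ℝ is continuous. Then there exists a unique continuous function υ : [0,a]×[0,b] → ℝ satisfying υ(x,y) = h(x,y) + (ρ₁^{1-φ₁} ρ₂^{1-φ₂})/(Γ(φ₁)Γ(φ₂)) ∫_0^x ∫_0^y s^{ρ₁-1} t^{ρ₂-1} (x^{ρ₁}-s^{ρ₁})^{φ₁-1} (y^{ρ₂}-t^{ρ₂})^{φ₂-1} F(s,t,υ(s,t)) dt ds for all (x,y). -/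
open Real MeasureTheory

/-- The mixed Katugampola fractional integral of order `(φ₁, φ₂)` with parameters `(ρ₁, ρ₂)`. -/
noncomputable def mixedKatInt (ρ₁ ρ₂ φ₁ φ₂ : ℝ) (μ : ℝ → ℝ → ℝ) (x y : ℝ) : ℝ :=
  (ρ₁ ^ (1 - φ₁) * ρ₂ ^ (1 - φ₂)) / (Real.Gamma φ₁ * Real.Gamma φ₂) *
    ∫ s in (0:ℝ)..x, ∫ t in (0:ℝ)..y,
      s ^ (ρ₁ - 1) * t ^ (ρ₂ - 1) * (x ^ ρ₁ - s ^ ρ₁) ^ (φ₁ - 1) *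
        (y ^ ρ₂ - t ^ ρ₂) ^ (φ₂ - 1) * μ s t

noncomputable def kk (ρ φ z : ℝ) : ℝ := z ^ (ρ - 1) * (1 - z ^ ρ) ^ (φ - 1)

lemma kk_nonneg (ρ φ : ℝ) {z : ℝ} (hz : z ∈ Set.Icc (0:ℝ) 1) (hρ : 0 < ρ) :
    0 ≤ kk ρ φ z := by
  unfold kk
  apply mul_nonneg (Real.rpow_nonneg hz.1 _)
  exact Real.rpow_nonneg (by simpa using Real.rpow_le_one hz.1 hz.2 hρ.le) _

lemma kk_contOn (ρ φ : ℝ) (hρ : 0 < ρ) : ContinuousOn (kk ρ φ) (Set.Ioo (0:ℝ) 1) := by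
  intro z hz
  have hpos : (0:ℝ) < 1 - z ^ ρ := by
    have := Real.rpow_lt_one hz.1.le hz.2 hρ
    linarith
  apply ContinuousAt.continuousWithinAt
  apply ContinuousAt.mul
  · exact Real.continuousAt_rpow_const _ _ (Or.inl hz.1.ne')
  · exact (continuousAt_const.sub (Real.continuousAt_rpow_const _ _ (Or.inl hz.1.ne'))).rpow_const
      (Or.inl hpos.ne')

lemma kk_mul_aesm (ρ φ : ℝ) (hρ : 0 < ρ) (f : ℝ → ℝ) (hf : Continuous f) :
    AEStronglyMeasurable (fun z => kk ρ φ z * f z)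
      ((volume : Measure ℝ).restrict (Set.Ioc 0 1)) := by
  rw [(Measure.restrict_congr_set Ioo_ae_eq_Ioc).symm]
  exact ((kk_contOn ρ φ hρ).mul hf.continuousOn).aestronglyMeasurable measurableSet_Ioo

lemma kk_antideriv (ρ φ : ℝ) (hρ : 0 < ρ) (hφ : 0 < φ) {z : ℝ} (hz : z ∈ Set.Ioo (0:ℝ) 1) :
    HasDerivAt (fun u : ℝ => -(1 - u ^ ρ) ^ φ / (ρ * φ)) (kk ρ φ z) z := by
  have h1 : HasDerivAt (fun u : ℝ => u ^ ρ) (ρ * z ^ (ρ - 1)) z := by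
    simpa using Real.hasDerivAt_rpow_const (p := ρ) (Or.inl hz.1.ne')
  have hpos : (0:ℝ) < 1 - z ^ ρ := by
    have := Real.rpow_lt_one hz.1.le hz.2 hρ
    linarith
  have h2 : HasDerivAt (fun u : ℝ => 1 - u ^ ρ) (0 - ρ * z ^ (ρ - 1)) z :=
    (hasDerivAt_const z 1).sub h1
  have h3 := h2.rpow_const (p := φ) (Or.inl hpos.ne')
  have h4 := h3.neg.div_const (ρ * φ)
  refine h4.congr_deriv ?_
  unfold kk
  field_simp
  ring

lemma kk_cont' (ρ φ : ℝ) (hρ : 0 < ρ) (hφ : 0 < φ) :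
    Continuous (fun u : ℝ => -(1 - u ^ ρ) ^ φ / (ρ * φ)) := by
  rw [continuous_iff_continuousAt]
  intro z
  apply ContinuousAt.div_const
  apply ContinuousAt.neg
  exact (Real.continuousAt_rpow_const _ _ (Or.inr hφ.le)).comp
    (continuousAt_const.sub (Real.continuousAt_rpow_const _ _ (Or.inr hρ.le)))

lemma kk_int (ρ φ : ℝ) (hρ : 0 < ρ) (hφ : 0 < φ) :
    IntegrableOn (kk ρ φ) (Set.Ioc (0:ℝ) 1) := by
  apply intervalIntegral.integrableOn_deriv_of_nonneg ((kk_cont' ρ φ hρ hφ).continuousOn)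
    (fun z hz => kk_antideriv ρ φ hρ hφ hz)
  exact fun z hz => kk_nonneg ρ φ ⟨hz.1.le, hz.2.le⟩ hρ

lemma kk_integral (ρ φ : ℝ) (hρ : 0 < ρ) (hφ : 0 < φ) :
    ∫ z in Set.Ioc (0:ℝ) 1, kk ρ φ z = 1 / (ρ * φ) := by
  rw [← intervalIntegral.integral_of_le (zero_le_one)]
  rw [intervalIntegral.integral_eq_sub_of_hasDeriv_right_of_le zero_le_one
    ((kk_cont' ρ φ hρ hφ).continuousOn)
    (fun z hz => (kk_antideriv ρ φ hρ hφ hz).hasDerivWithinAt)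
    ((intervalIntegrable_iff_integrableOn_Ioc_of_le zero_le_one).2 (kk_int ρ φ hρ hφ))]
  rw [Real.one_rpow, Real.zero_rpow hρ.ne']
  norm_num [Real.zero_rpow hφ.ne']
  field_simp

lemma kk_scale (ρ φ : ℝ) (hρ : 0 < ρ) {y z : ℝ} (hy : 0 < y) (hz : z ∈ Set.Icc (0:ℝ) 1) :
    (y * z) ^ (ρ - 1) * (y ^ ρ - (y * z) ^ ρ) ^ (φ - 1) = y ^ (ρ * φ - 1) * kk ρ φ z := by
  have h1 : (y * z) ^ (ρ - 1) = y ^ (ρ - 1) * z ^ (ρ - 1) := Real.mul_rpow hy.le hz.1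
  have h2 : (y * z) ^ ρ = y ^ ρ * z ^ ρ := Real.mul_rpow hy.le hz.1
  have h3 : y ^ ρ - y ^ ρ * z ^ ρ = y ^ ρ * (1 - z ^ ρ) := by ring
  have h4 : (y ^ ρ * (1 - z ^ ρ)) ^ (φ - 1)
      = y ^ (ρ * (φ - 1)) * (1 - z ^ ρ) ^ (φ - 1) := by
    rw [Real.mul_rpow (Real.rpow_nonneg hy.le _)
      (by simpa using Real.rpow_le_one hz.1 hz.2 hρ.le), ← Real.rpow_mul hy.le]
  have h5 : y ^ (ρ - 1) * y ^ (ρ * (φ - 1)) = y ^ (ρ * φ - 1) := by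
    rw [← Real.rpow_add hy]
    ring_nf
  rw [h1, h2, h3, h4]
  unfold kk
  calc y ^ (ρ - 1) * z ^ (ρ - 1) * (y ^ (ρ * (φ - 1)) * (1 - z ^ ρ) ^ (φ - 1))
      = (y ^ (ρ - 1) * y ^ (ρ * (φ - 1))) * (z ^ (ρ - 1) * (1 - z ^ ρ) ^ (φ - 1)) := by ring
    _ = _ := by rw [h5]

lemma scale_integral (ρ φ : ℝ) (hρ : 0 < ρ) {y : ℝ} (hy : 0 < y) (f : ℝ → ℝ) :
    (∫ t in (0:ℝ)..y, t ^ (ρ - 1) * (y ^ ρ - t ^ ρ) ^ (φ - 1) * f t)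
      = y ^ (ρ * φ) * ∫ z in Set.Ioc (0:ℝ) 1, kk ρ φ z * f (y * z) := by
  have key : (∫ z in (0:ℝ)..1,
        (fun t => t ^ (ρ - 1) * (y ^ ρ - t ^ ρ) ^ (φ - 1) * f t) (y * z))
      = y⁻¹ • ∫ t in (y * 0)..(y * 1), t ^ (ρ - 1) * (y ^ ρ - t ^ ρ) ^ (φ - 1) * f t :=
    intervalIntegral.integral_comp_mul_left
      (fun t => t ^ (ρ - 1) * (y ^ ρ - t ^ ρ) ^ (φ - 1) * f t) hy.ne'
  have hcong : (∫ z in (0:ℝ)..1,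
        (fun t => t ^ (ρ - 1) * (y ^ ρ - t ^ ρ) ^ (φ - 1) * f t) (y * z))
      = ∫ z in (0:ℝ)..1, y ^ (ρ * φ - 1) * (kk ρ φ z * f (y * z)) := by
    apply intervalIntegral.integral_congr
    intro z hz
    rw [Set.uIcc_of_le zero_le_one] at hz
    simp only
    rw [kk_scale ρ φ hρ hy hz]
    ring
  rw [hcong, intervalIntegral.integral_const_mul] at key
  have h01 : (∫ z in (0:ℝ)..1, kk ρ φ z * f (y * z))
      = ∫ z in Set.Ioc (0:ℝ) 1, kk ρ φ z * f (y * z) :=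
    intervalIntegral.integral_of_le zero_le_one
  rw [h01] at key
  rw [mul_zero, mul_one] at key
  have key2 : (∫ t in (0:ℝ)..y, t ^ (ρ - 1) * (y ^ ρ - t ^ ρ) ^ (φ - 1) * f t)
      = y * (y ^ (ρ * φ - 1) * ∫ z in Set.Ioc (0:ℝ) 1, kk ρ φ z * f (y * z)) := by
    rw [key, smul_eq_mul, ← mul_assoc, mul_inv_cancel₀ hy.ne', one_mul]
  rw [key2, ← mul_assoc]
  congr 1
  nth_rewrite 1 [← Real.rpow_one y]
  rw [← Real.rpow_add hy]
  ring_nf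

noncomputable def PhiInt (ρ₁ ρ₂ φ₁ φ₂ : ℝ) (g : ℝ → ℝ → ℝ) (x y : ℝ) : ℝ :=
  ∫ w in Set.Ioc (0:ℝ) 1, kk ρ₁ φ₁ w *
    ∫ z in Set.Ioc (0:ℝ) 1, kk ρ₂ φ₂ z * g (x * w) (y * z)

lemma rep (ρ₁ ρ₂ φ₁ φ₂ : ℝ) (hρ₁ : 0 < ρ₁) (hρ₂ : 0 < ρ₂) (hφ₁ : 0 < φ₁) (hφ₂ : 0 < φ₂)
    (g : ℝ → ℝ → ℝ) {x y : ℝ} (hx : 0 ≤ x) (hy : 0 ≤ y) :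
    mixedKatInt ρ₁ ρ₂ φ₁ φ₂ g x y
      = (ρ₁ ^ (1 - φ₁) * ρ₂ ^ (1 - φ₂)) / (Real.Gamma φ₁ * Real.Gamma φ₂) *
        (x ^ (ρ₁ * φ₁) * (y ^ (ρ₂ * φ₂) * PhiInt ρ₁ ρ₂ φ₁ φ₂ g x y)) := by
  unfold mixedKatInt
  rcases hx.eq_or_lt with hx0 | hxpos
  · rw [← hx0]
    rw [Real.zero_rpow (by positivity : ρ₁ * φ₁ ≠ 0)]
    simp
  rcases hy.eq_or_lt with hy0 | hypos
  · rw [← hy0]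
    rw [Real.zero_rpow (by positivity : ρ₂ * φ₂ ≠ 0)]
    simp
  have inner_eq : ∀ s : ℝ,
      (∫ t in (0:ℝ)..y, s ^ (ρ₁ - 1) * t ^ (ρ₂ - 1) * (x ^ ρ₁ - s ^ ρ₁) ^ (φ₁ - 1) *
          (y ^ ρ₂ - t ^ ρ₂) ^ (φ₂ - 1) * g s t)
      = y ^ (ρ₂ * φ₂) * (s ^ (ρ₁ - 1) * (x ^ ρ₁ - s ^ ρ₁) ^ (φ₁ - 1) *
          ∫ z in Set.Ioc (0:ℝ) 1, kk ρ₂ φ₂ z * g s (y * z)) := by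
    intro s
    have hrw : (fun t : ℝ => s ^ (ρ₁ - 1) * t ^ (ρ₂ - 1) * (x ^ ρ₁ - s ^ ρ₁) ^ (φ₁ - 1) *
          (y ^ ρ₂ - t ^ ρ₂) ^ (φ₂ - 1) * g s t)
        = fun t : ℝ => (s ^ (ρ₁ - 1) * (x ^ ρ₁ - s ^ ρ₁) ^ (φ₁ - 1)) *
            (t ^ (ρ₂ - 1) * (y ^ ρ₂ - t ^ ρ₂) ^ (φ₂ - 1) * g s t) := by
      funext t; ring
    rw [hrw, intervalIntegral.integral_const_mul,
      scale_integral ρ₂ φ₂ hρ₂ hypos (fun t => g s t)]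
    ring
  simp only [inner_eq]
  rw [intervalIntegral.integral_const_mul,
    scale_integral ρ₁ φ₁ hρ₁ hxpos
      (fun s => ∫ z in Set.Ioc (0:ℝ) 1, kk ρ₂ φ₂ z * g s (y * z))]
  unfold PhiInt
  ring

lemma bound_inner (ρ φ : ℝ) (hρ : 0 < ρ) (hφ : 0 < φ) (f : ℝ → ℝ) (M : ℝ)
    (hM : ∀ z ∈ Set.Ioc (0:ℝ) 1, |f z| ≤ M) :
    |∫ z in Set.Ioc (0:ℝ) 1, kk ρ φ z * f z| ≤ 1 / (ρ * φ) * M := by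
  have hb : Integrable (fun z => kk ρ φ z * M) ((volume : Measure ℝ).restrict (Set.Ioc 0 1)) :=
    (kk_int ρ φ hρ hφ).mul_const M
  have hle : ‖∫ z in Set.Ioc (0:ℝ) 1, kk ρ φ z * f z‖
      ≤ ∫ z in Set.Ioc (0:ℝ) 1, kk ρ φ z * M := by
    apply norm_integral_le_of_norm_le hb
    rw [ae_restrict_iff' measurableSet_Ioc]
    apply Filter.Eventually.of_forall
    intro z hz
    have hk : 0 ≤ kk ρ φ z := kk_nonneg ρ φ ⟨hz.1.le, hz.2⟩ hρ
    rw [Real.norm_eq_abs, abs_mul, abs_of_nonneg hk]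
    exact mul_le_mul_of_nonneg_left (hM z hz) hk
  rw [Real.norm_eq_abs] at hle
  calc |∫ z in Set.Ioc (0:ℝ) 1, kk ρ φ z * f z|
      ≤ ∫ z in Set.Ioc (0:ℝ) 1, kk ρ φ z * M := hle
    _ = (∫ z in Set.Ioc (0:ℝ) 1, kk ρ φ z) * M := by rw [integral_mul_const]
    _ = 1 / (ρ * φ) * M := by rw [kk_integral ρ φ hρ hφ]

lemma integrable_kk_mul (ρ φ : ℝ) (hρ : 0 < ρ) (hφ : 0 < φ) (f : ℝ → ℝ)
    (hf : Continuous f) (M : ℝ) (hM : ∀ z, |f z| ≤ M) :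
    IntegrableOn (fun z => kk ρ φ z * f z) (Set.Ioc (0:ℝ) 1) := by
  apply Integrable.mono' ((kk_int ρ φ hρ hφ).mul_const M) (kk_mul_aesm ρ φ hρ f hf)
  rw [ae_restrict_iff' measurableSet_Ioc]
  apply Filter.Eventually.of_forall
  intro z hz
  have hk : 0 ≤ kk ρ φ z := kk_nonneg ρ φ ⟨hz.1.le, hz.2⟩ hρ
  rw [Real.norm_eq_abs, abs_mul, abs_of_nonneg hk]
  exact mul_le_mul_of_nonneg_left (hM z) hk

lemma int_cont (ρ φ : ℝ) (hρ : 0 < ρ) (hφ : 0 < φ) (g : ℝ × ℝ → ℝ)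
    (hg : Continuous g) (M : ℝ) (hM : ∀ p, |g p| ≤ M) :
    Continuous fun q : ℝ × ℝ => ∫ z in Set.Ioc (0:ℝ) 1, kk ρ φ z * g (q.1, q.2 * z) := by
  apply continuous_of_dominated (bound := fun z => |kk ρ φ z| * M)
  · intro q
    exact kk_mul_aesm ρ φ hρ (fun z => g (q.1, q.2 * z))
      (hg.comp (continuous_const.prodMk (continuous_const.mul continuous_id)))
  · intro q
    apply Filter.Eventually.of_forall
    intro z
    rw [Real.norm_eq_abs, abs_mul]
    exact mul_le_mul_of_nonneg_left (hM _) (abs_nonneg _)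
  · exact (kk_int ρ φ hρ hφ).norm.mul_const M
  · apply Filter.Eventually.of_forall
    intro z
    exact continuous_const.mul
      (hg.comp (continuous_fst.prodMk (continuous_snd.mul continuous_const)))

lemma Phi_cont (ρ₁ ρ₂ φ₁ φ₂ : ℝ) (hρ₁ : 0 < ρ₁) (hρ₂ : 0 < ρ₂)
    (hφ₁ : 0 < φ₁) (hφ₂ : 0 < φ₂) (g : ℝ → ℝ → ℝ)
    (hg : Continuous fun p : ℝ × ℝ => g p.1 p.2) (M : ℝ)
    (hM : ∀ s t, |g s t| ≤ M) :
    Continuous fun p : ℝ × ℝ => PhiInt ρ₁ ρ₂ φ₁ φ₂ g p.1 p.2 := by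
  set J : ℝ × ℝ → ℝ := fun q => ∫ z in Set.Ioc (0:ℝ) 1, kk ρ₂ φ₂ z *
    (fun p : ℝ × ℝ => g p.1 p.2) (q.1, q.2 * z) with hJdef
  have hJ : Continuous J :=
    int_cont ρ₂ φ₂ hρ₂ hφ₂ _ hg M (fun p => hM p.1 p.2)
  have hJb : ∀ q : ℝ × ℝ, |J q| ≤ 1 / (ρ₂ * φ₂) * M := by
    intro q
    exact bound_inner ρ₂ φ₂ hρ₂ hφ₂ _ M (fun z _ => hM _ _)
  have key : Continuous fun p : ℝ × ℝ =>
      ∫ w in Set.Ioc (0:ℝ) 1, kk ρ₁ φ₁ w * J (p.1 * w, p.2) := by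
    apply continuous_of_dominated (bound := fun w => |kk ρ₁ φ₁ w| * (1 / (ρ₂ * φ₂) * M))
    · intro p
      exact kk_mul_aesm ρ₁ φ₁ hρ₁ (fun w => J (p.1 * w, p.2))
        (hJ.comp ((continuous_const.mul continuous_id).prodMk continuous_const))
    · intro p
      apply Filter.Eventually.of_forall
      intro w
      rw [Real.norm_eq_abs, abs_mul]
      exact mul_le_mul_of_nonneg_left (hJb _) (abs_nonneg _)
    · exact (kk_int ρ₁ φ₁ hρ₁ hφ₁).norm.mul_const _
    · apply Filter.Eventually.of_forall
      intro w
      exact continuous_const.mul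
        (hJ.comp ((continuous_fst.mul continuous_const).prodMk continuous_snd))
  exact key

lemma Phi_diff (ρ₁ ρ₂ φ₁ φ₂ : ℝ) (hρ₁ : 0 < ρ₁) (hρ₂ : 0 < ρ₂)
    (hφ₁ : 0 < φ₁) (hφ₂ : 0 < φ₂) (g g' : ℝ → ℝ → ℝ)
    (hg : Continuous fun p : ℝ × ℝ => g p.1 p.2)
    (hg' : Continuous fun p : ℝ × ℝ => g' p.1 p.2)
    (Mg Mg' : ℝ) (hMg : ∀ s t, |g s t| ≤ Mg) (hMg' : ∀ s t, |g' s t| ≤ Mg')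
    (D : ℝ) (hD : ∀ s t, |g s t - g' s t| ≤ D) (x y : ℝ) :
    |PhiInt ρ₁ ρ₂ φ₁ φ₂ g x y - PhiInt ρ₁ ρ₂ φ₁ φ₂ g' x y|
      ≤ 1 / (ρ₁ * φ₁) * (1 / (ρ₂ * φ₂) * D) := by
  set Jg : ℝ → ℝ := fun w => ∫ z in Set.Ioc (0:ℝ) 1, kk ρ₂ φ₂ z * g (x * w) (y * z) with hJg
  set Jg' : ℝ → ℝ := fun w => ∫ z in Set.Ioc (0:ℝ) 1, kk ρ₂ φ₂ z * g' (x * w) (y * z) with hJg'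
  have hJgcont : Continuous Jg :=
    (int_cont ρ₂ φ₂ hρ₂ hφ₂ (fun p => g p.1 p.2) hg Mg (fun p => hMg _ _)).comp
      ((continuous_const.mul continuous_id).prodMk continuous_const)
  have hJg'cont : Continuous Jg' :=
    (int_cont ρ₂ φ₂ hρ₂ hφ₂ (fun p => g' p.1 p.2) hg' Mg' (fun p => hMg' _ _)).comp
      ((continuous_const.mul continuous_id).prodMk continuous_const)
  have hJgb : ∀ w, |Jg w| ≤ 1 / (ρ₂ * φ₂) * Mg := fun w =>
    bound_inner ρ₂ φ₂ hρ₂ hφ₂ _ Mg (fun z _ => hMg _ _)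
  have hJg'b : ∀ w, |Jg' w| ≤ 1 / (ρ₂ * φ₂) * Mg' := fun w =>
    bound_inner ρ₂ φ₂ hρ₂ hφ₂ _ Mg' (fun z _ => hMg' _ _)
  have hint : IntegrableOn (fun w => kk ρ₁ φ₁ w * Jg w) (Set.Ioc (0:ℝ) 1) :=
    integrable_kk_mul ρ₁ φ₁ hρ₁ hφ₁ Jg hJgcont _ hJgb
  have hint' : IntegrableOn (fun w => kk ρ₁ φ₁ w * Jg' w) (Set.Ioc (0:ℝ) 1) :=
    integrable_kk_mul ρ₁ φ₁ hρ₁ hφ₁ Jg' hJg'cont _ hJg'b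
  have hdiffJ : ∀ w ∈ Set.Ioc (0:ℝ) 1, |Jg w - Jg' w| ≤ 1 / (ρ₂ * φ₂) * D := by
    intro w _
    have h1 : IntegrableOn (fun z => kk ρ₂ φ₂ z * g (x * w) (y * z)) (Set.Ioc (0:ℝ) 1) :=
      integrable_kk_mul ρ₂ φ₂ hρ₂ hφ₂ _
        (hg.comp (continuous_const.prodMk (continuous_const.mul continuous_id)))
        Mg (fun z => hMg _ _)
    have h2 : IntegrableOn (fun z => kk ρ₂ φ₂ z * g' (x * w) (y * z)) (Set.Ioc (0:ℝ) 1) :=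
      integrable_kk_mul ρ₂ φ₂ hρ₂ hφ₂ _
        (hg'.comp (continuous_const.prodMk (continuous_const.mul continuous_id)))
        Mg' (fun z => hMg' _ _)
    have heq : Jg w - Jg' w
        = ∫ z in Set.Ioc (0:ℝ) 1, kk ρ₂ φ₂ z * (g (x * w) (y * z) - g' (x * w) (y * z)) := by
      rw [hJg, hJg']
      simp only
      rw [← integral_sub h1 h2]
      congr 1
      funext z
      ring
    rw [heq]
    exact bound_inner ρ₂ φ₂ hρ₂ hφ₂ _ D (fun z _ => hD _ _)
  have heq2 : PhiInt ρ₁ ρ₂ φ₁ φ₂ g x y - PhiInt ρ₁ ρ₂ φ₁ φ₂ g' x y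
      = ∫ w in Set.Ioc (0:ℝ) 1, kk ρ₁ φ₁ w * (Jg w - Jg' w) := by
    unfold PhiInt
    rw [← integral_sub hint hint']
    congr 1
    funext w
    ring
  rw [heq2]
  exact bound_inner ρ₁ φ₁ hρ₁ hφ₁ _ _ hdiffJ

lemma Xi_eq (ρ₁ ρ₂ φ₁ φ₂ a b R : ℝ) (hρ₁ : 0 < ρ₁) (hρ₂ : 0 < ρ₂)
    (hφ₁ : 0 < φ₁) (hφ₂ : 0 < φ₂) (ha : 0 < a) (hb : 0 < b) :
    (ρ₁ ^ (1 - φ₁) * ρ₂ ^ (1 - φ₂)) / (Real.Gamma φ₁ * Real.Gamma φ₂) *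
      (a ^ (ρ₁ * φ₁) * (b ^ (ρ₂ * φ₂) * (1 / (ρ₁ * φ₁) * (1 / (ρ₂ * φ₂) * R))))
    = R / (Real.Gamma (φ₁ + 1) * Real.Gamma (φ₂ + 1)) *
        (a ^ ρ₁ / ρ₁) ^ φ₁ * (b ^ ρ₂ / ρ₂) ^ φ₂ := by
  rw [Real.Gamma_add_one hφ₁.ne', Real.Gamma_add_one hφ₂.ne',
    Real.div_rpow (Real.rpow_nonneg ha.le _) hρ₁.le,
    Real.div_rpow (Real.rpow_nonneg hb.le _) hρ₂.le,
    ← Real.rpow_mul ha.le, ← Real.rpow_mul hb.le,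
    Real.rpow_sub hρ₁, Real.rpow_sub hρ₂, Real.rpow_one, Real.rpow_one]
  have hΓ₁ := Real.Gamma_pos_of_pos hφ₁
  have hΓ₂ := Real.Gamma_pos_of_pos hφ₂
  have h₁ : (0:ℝ) < ρ₁ ^ φ₁ := Real.rpow_pos_of_pos hρ₁ _
  have h₂ : (0:ℝ) < ρ₂ ^ φ₂ := Real.rpow_pos_of_pos hρ₂ _
  field_simp

lemma MK_congr (ρ₁ ρ₂ φ₁ φ₂ : ℝ) (μ₁ μ₂ : ℝ → ℝ → ℝ) {x y : ℝ} (hx : 0 ≤ x) (hy : 0 ≤ y)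
    (hμ : ∀ s ∈ Set.Icc 0 x, ∀ t ∈ Set.Icc 0 y, μ₁ s t = μ₂ s t) :
    mixedKatInt ρ₁ ρ₂ φ₁ φ₂ μ₁ x y = mixedKatInt ρ₁ ρ₂ φ₁ φ₂ μ₂ x y := by
  unfold mixedKatInt
  congr 1
  apply intervalIntegral.integral_congr
  intro s hs
  rw [Set.uIcc_of_le hx] at hs
  simp only
  apply intervalIntegral.integral_congr
  intro t ht
  rw [Set.uIcc_of_le hy] at ht
  simp only
  rw [hμ s hs t ht]


theorem darboux_unique_solution (ρ₁ ρ₂ φ₁ φ₂ a b R : ℝ)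
    (hρ₁ : 0 < ρ₁) (hρ₂ : 0 < ρ₂)
    (hφ₁ : φ₁ ∈ Set.Ioo (0:ℝ) 1) (hφ₂ : φ₂ ∈ Set.Ioo (0:ℝ) 1)
    (hR : 0 < R) (ha : 0 < a) (hb : 0 < b)
    (hΞ : R / (Real.Gamma (φ₁ + 1) * Real.Gamma (φ₂ + 1)) *
        (a ^ ρ₁ / ρ₁) ^ φ₁ * (b ^ ρ₂ / ρ₂) ^ φ₂ < 1)
    (F : ℝ → ℝ → ℝ → ℝ)
    (hF : ContinuousOn (fun p : ℝ × ℝ × ℝ => F p.1 p.2.1 p.2.2)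
      (Set.Icc 0 a ×ˢ Set.Icc 0 b ×ˢ Set.univ))
    (hLip : ∀ x y u v : ℝ, |F x y u - F x y v| ≤ R * |u - v|)
    (h : ℝ → ℝ → ℝ)
    (hh : ContinuousOn (fun p : ℝ × ℝ => h p.1 p.2) (Set.Icc 0 a ×ˢ Set.Icc 0 b)) :
    ∃ υ : ℝ → ℝ → ℝ,
      (ContinuousOn (fun p : ℝ × ℝ => υ p.1 p.2) (Set.Icc 0 a ×ˢ Set.Icc 0 b) ∧
        ∀ x ∈ Set.Icc (0:ℝ) a, ∀ y ∈ Set.Icc (0:ℝ) b,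
          υ x y = h x y +
            mixedKatInt ρ₁ ρ₂ φ₁ φ₂ (fun s t => F s t (υ s t)) x y) ∧
      ∀ υ' : ℝ → ℝ → ℝ,
        (ContinuousOn (fun p : ℝ × ℝ => υ' p.1 p.2) (Set.Icc 0 a ×ˢ Set.Icc 0 b) ∧
          ∀ x ∈ Set.Icc (0:ℝ) a, ∀ y ∈ Set.Icc (0:ℝ) b,
            υ' x y = h x y +
              mixedKatInt ρ₁ ρ₂ φ₁ φ₂ (fun s t => F s t (υ' s t)) x y) →
        ∀ x ∈ Set.Icc (0:ℝ) a, ∀ y ∈ Set.Icc (0:ℝ) b, υ' x y = υ x y := by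
  obtain ⟨hφ₁0, hφ₁1⟩ := hφ₁
  obtain ⟨hφ₂0, hφ₂1⟩ := hφ₂
  haveI : CompactSpace ↥(Set.Icc (0:ℝ) a) := isCompact_iff_compactSpace.mp isCompact_Icc
  haveI : CompactSpace ↥(Set.Icc (0:ℝ) b) := isCompact_iff_compactSpace.mp isCompact_Icc
  have hprojc : Continuous fun p : ℝ × ℝ =>
      ((Set.projIcc 0 a ha.le p.1, Set.projIcc 0 b hb.le p.2) :
        ↥(Set.Icc (0:ℝ) a) × ↥(Set.Icc (0:ℝ) b)) :=
    (continuous_projIcc.comp continuous_fst).prodMk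
      (continuous_projIcc.comp continuous_snd)
  have hincl : Continuous fun p : ↥(Set.Icc (0:ℝ) a) × ↥(Set.Icc (0:ℝ) b) =>
      ((↑p.1, ↑p.2) : ℝ × ℝ) :=
    (continuous_subtype_val.comp continuous_fst).prodMk
      (continuous_subtype_val.comp continuous_snd)
  set gf : C(↥(Set.Icc (0:ℝ) a) × ↥(Set.Icc (0:ℝ) b), ℝ) → ℝ → ℝ → ℝ := fun f s t =>
    F ↑(Set.projIcc 0 a ha.le s) ↑(Set.projIcc 0 b hb.le t)
      (f (Set.projIcc 0 a ha.le s, Set.projIcc 0 b hb.le t)) with hgf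
  have hgfc : ∀ f, Continuous fun p : ℝ × ℝ => gf f p.1 p.2 := by
    intro f
    have hmap : Continuous (fun p : ℝ × ℝ =>
        ((↑(Set.projIcc 0 a ha.le p.1) : ℝ), ((↑(Set.projIcc 0 b hb.le p.2) : ℝ),
          f (Set.projIcc 0 a ha.le p.1, Set.projIcc 0 b hb.le p.2)))) :=
      ((continuous_subtype_val.comp (continuous_projIcc.comp continuous_fst)).prodMk
        ((continuous_subtype_val.comp (continuous_projIcc.comp continuous_snd)).prodMk
          (f.continuous.comp hprojc)))
    exact hF.comp_continuous hmap (fun p =>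
      ⟨(Set.projIcc 0 a ha.le p.1).2, (Set.projIcc 0 b hb.le p.2).2, Set.mem_univ _⟩)
  have hgfb : ∀ f, ∃ M : ℝ, ∀ s t, |gf f s t| ≤ M := by
    intro f
    have hcomp : IsCompact (Set.Icc (0:ℝ) a ×ˢ Set.Icc (0:ℝ) b ×ˢ Set.range ⇑f) :=
      isCompact_Icc.prod (isCompact_Icc.prod (isCompact_range f.continuous))
    obtain ⟨M, hM⟩ := hcomp.exists_bound_of_continuousOn
      (hF.mono (Set.prod_mono Set.Subset.rfl (Set.prod_mono Set.Subset.rfl (Set.subset_univ _))))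
    refine ⟨M, fun s t => ?_⟩
    have := hM (↑(Set.projIcc 0 a ha.le s), ↑(Set.projIcc 0 b hb.le t),
        f (Set.projIcc 0 a ha.le s, Set.projIcc 0 b hb.le t))
      ⟨(Set.projIcc 0 a ha.le s).2, (Set.projIcc 0 b hb.le t).2, Set.mem_range_self _⟩
    simpa [Real.norm_eq_abs] using this
  set c := (ρ₁ ^ (1 - φ₁) * ρ₂ ^ (1 - φ₂)) / (Real.Gamma φ₁ * Real.Gamma φ₂) with hcdef
  have hΓ₁ := Real.Gamma_pos_of_pos hφ₁0
  have hΓ₂ := Real.Gamma_pos_of_pos hφ₂0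
  have hcpos : 0 < c := div_pos (mul_pos (Real.rpow_pos_of_pos hρ₁ _)
    (Real.rpow_pos_of_pos hρ₂ _)) (mul_pos hΓ₁ hΓ₂)
  have hrp1 : Continuous fun x : ℝ => x ^ (ρ₁ * φ₁) := by
    rw [continuous_iff_continuousAt]
    exact fun x => Real.continuousAt_rpow_const _ _ (Or.inr (by positivity))
  have hrp2 : Continuous fun x : ℝ => x ^ (ρ₂ * φ₂) := by
    rw [continuous_iff_continuousAt]
    exact fun x => Real.continuousAt_rpow_const _ _ (Or.inr (by positivity))
  have hTcont : ∀ f, Continuous fun p : ↥(Set.Icc (0:ℝ) a) × ↥(Set.Icc (0:ℝ) b) =>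
      h ↑p.1 ↑p.2 + c * ((p.1 : ℝ) ^ (ρ₁ * φ₁) * ((p.2 : ℝ) ^ (ρ₂ * φ₂) *
        PhiInt ρ₁ ρ₂ φ₁ φ₂ (gf f) ↑p.1 ↑p.2)) := by
    intro f
    obtain ⟨M, hM⟩ := hgfb f
    apply Continuous.add
    · exact hh.comp_continuous hincl (fun p => Set.mk_mem_prod p.1.2 p.2.2)
    · apply continuous_const.mul
      apply Continuous.mul
      · exact hrp1.comp (continuous_subtype_val.comp continuous_fst)
      · apply Continuous.mul
        · exact hrp2.comp (continuous_subtype_val.comp continuous_snd)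
        · exact (Phi_cont ρ₁ ρ₂ φ₁ φ₂ hρ₁ hρ₂ hφ₁0 hφ₂0 (gf f) (hgfc f) M hM).comp hincl
  set T : C(↥(Set.Icc (0:ℝ) a) × ↥(Set.Icc (0:ℝ) b), ℝ) →
      C(↥(Set.Icc (0:ℝ) a) × ↥(Set.Icc (0:ℝ) b), ℝ) := fun f =>
    ContinuousMap.mk (fun p => h ↑p.1 ↑p.2 + c * ((p.1 : ℝ) ^ (ρ₁ * φ₁) *
      ((p.2 : ℝ) ^ (ρ₂ * φ₂) * PhiInt ρ₁ ρ₂ φ₁ φ₂ (gf f) ↑p.1 ↑p.2))) (hTcont f) with hT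
  have hTeq : ∀ f, ∀ p : ↥(Set.Icc (0:ℝ) a) × ↥(Set.Icc (0:ℝ) b),
      T f p = h ↑p.1 ↑p.2 + mixedKatInt ρ₁ ρ₂ φ₁ φ₂ (gf f) ↑p.1 ↑p.2 := by
    intro f p
    rw [rep ρ₁ ρ₂ φ₁ φ₂ hρ₁ hρ₂ hφ₁0 hφ₂0 (gf f) p.1.2.1 p.2.2.1]
    simp only [hT, ContinuousMap.coe_mk, hcdef]
  set Ξ₀ := c * (a ^ (ρ₁ * φ₁) * (b ^ (ρ₂ * φ₂) *
      (1 / (ρ₁ * φ₁) * (1 / (ρ₂ * φ₂) * R)))) with hΞ₀def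
  have hΞ₀nonneg : 0 ≤ Ξ₀ := by
    have h1 : (0:ℝ) ≤ a ^ (ρ₁ * φ₁) := Real.rpow_nonneg ha.le _
    have h2 : (0:ℝ) ≤ b ^ (ρ₂ * φ₂) := Real.rpow_nonneg hb.le _
    positivity
  have hΞ₀lt : Ξ₀ < 1 := by
    rw [hΞ₀def, hcdef, Xi_eq ρ₁ ρ₂ φ₁ φ₂ a b R hρ₁ hρ₂ hφ₁0 hφ₂0 ha hb]
    exact hΞ
  have hdist : ∀ f f', dist (T f) (T f') ≤ Ξ₀ * dist f f' := by
    intro f f'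
    obtain ⟨M, hM⟩ := hgfb f
    obtain ⟨M', hM'⟩ := hgfb f'
    rw [ContinuousMap.dist_le (mul_nonneg hΞ₀nonneg dist_nonneg)]
    intro p
    have hgd : ∀ s t, |gf f s t - gf f' s t| ≤ R * dist f f' := by
      intro s t
      refine (hLip _ _ _ _).trans ?_
      have hd := ContinuousMap.dist_apply_le_dist (f := f) (g := f')
        (Set.projIcc 0 a ha.le s, Set.projIcc 0 b hb.le t)
      rw [Real.dist_eq] at hd
      exact mul_le_mul_of_nonneg_left hd hR.le
    have hΦ := Phi_diff ρ₁ ρ₂ φ₁ φ₂ hρ₁ hρ₂ hφ₁0 hφ₂0 (gf f) (gf f') (hgfc f) (hgfc f')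
      M M' hM hM' (R * dist f f') hgd ↑p.1 ↑p.2
    rw [Real.dist_eq]
    have hTfp : T f p - T f' p = c * ((p.1 : ℝ) ^ (ρ₁ * φ₁) * ((p.2 : ℝ) ^ (ρ₂ * φ₂) *
        (PhiInt ρ₁ ρ₂ φ₁ φ₂ (gf f) ↑p.1 ↑p.2 - PhiInt ρ₁ ρ₂ φ₁ φ₂ (gf f') ↑p.1 ↑p.2))) := by
      simp only [hT, ContinuousMap.coe_mk]
      ring
    rw [hTfp, abs_mul, abs_of_pos hcpos, abs_mul,
      abs_of_nonneg (Real.rpow_nonneg p.1.2.1 _), abs_mul,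
      abs_of_nonneg (Real.rpow_nonneg p.2.2.1 _)]
    calc c * ((p.1 : ℝ) ^ (ρ₁ * φ₁) * ((p.2 : ℝ) ^ (ρ₂ * φ₂) *
          |PhiInt ρ₁ ρ₂ φ₁ φ₂ (gf f) ↑p.1 ↑p.2 - PhiInt ρ₁ ρ₂ φ₁ φ₂ (gf f') ↑p.1 ↑p.2|))
        ≤ c * (a ^ (ρ₁ * φ₁) * (b ^ (ρ₂ * φ₂) *
          (1 / (ρ₁ * φ₁) * (1 / (ρ₂ * φ₂) * (R * dist f f'))))) := by
          have hxa : (p.1 : ℝ) ^ (ρ₁ * φ₁) ≤ a ^ (ρ₁ * φ₁) :=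
            Real.rpow_le_rpow p.1.2.1 p.1.2.2 (by positivity)
          have hyb : (p.2 : ℝ) ^ (ρ₂ * φ₂) ≤ b ^ (ρ₂ * φ₂) :=
            Real.rpow_le_rpow p.2.2.1 p.2.2.2 (by positivity)
          have h1 : (0:ℝ) ≤ (p.1 : ℝ) ^ (ρ₁ * φ₁) := Real.rpow_nonneg p.1.2.1 _
          have h2 : (0:ℝ) ≤ (p.2 : ℝ) ^ (ρ₂ * φ₂) := Real.rpow_nonneg p.2.2.1 _
          have h3 : (0:ℝ) ≤ 1 / (ρ₁ * φ₁) * (1 / (ρ₂ * φ₂) * (R * dist f f')) := by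
            have := dist_nonneg (x := f) (y := f')
            positivity
          gcongr
          all_goals first
          | exact hΦ
          | exact (abs_nonneg _).trans hΦ
          | positivity
      _ = Ξ₀ * dist f f' := by rw [hΞ₀def]; ring
  haveI : Nonempty (C(↥(Set.Icc (0:ℝ) a) × ↥(Set.Icc (0:ℝ) b), ℝ)) :=
    ⟨ContinuousMap.const _ 0⟩
  have hCW : ContractingWith ⟨Ξ₀, hΞ₀nonneg⟩ T := by
    constructor
    · exact_mod_cast hΞ₀lt
    · exact LipschitzWith.of_dist_le_mul hdist
  set fstar := ContractingWith.fixedPoint T hCW with hfstar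
  have hfix : T fstar = fstar := hCW.fixedPoint_isFixedPt
  refine ⟨fun x y => fstar (Set.projIcc 0 a ha.le x, Set.projIcc 0 b hb.le y), ⟨?_, ?_⟩, ?_⟩
  · exact (fstar.continuous.comp hprojc).continuousOn
  · intro x hx y hy
    show fstar (Set.projIcc 0 a ha.le x, Set.projIcc 0 b hb.le y) = _
    have hpx : Set.projIcc 0 a ha.le x = ⟨x, hx⟩ := Set.projIcc_of_mem ha.le hx
    have hpy : Set.projIcc 0 b hb.le y = ⟨y, hy⟩ := Set.projIcc_of_mem hb.le hy
    have step1 : fstar (Set.projIcc 0 a ha.le x, Set.projIcc 0 b hb.le y)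
        = T fstar (⟨x, hx⟩, ⟨y, hy⟩) := by rw [hpx, hpy, hfix]
    have step2 : T fstar ((⟨x, hx⟩, ⟨y, hy⟩) :
        ↥(Set.Icc (0:ℝ) a) × ↥(Set.Icc (0:ℝ) b))
        = h x y + mixedKatInt ρ₁ ρ₂ φ₁ φ₂ (gf fstar) x y := hTeq fstar _
    have step3 : mixedKatInt ρ₁ ρ₂ φ₁ φ₂ (gf fstar) x y
        = mixedKatInt ρ₁ ρ₂ φ₁ φ₂
          (fun s t => F s t (fstar (Set.projIcc 0 a ha.le s, Set.projIcc 0 b hb.le t))) x y := by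
      apply MK_congr ρ₁ ρ₂ φ₁ φ₂ _ _ hx.1 hy.1
      intro s hs t ht
      have hsa : s ∈ Set.Icc (0:ℝ) a := ⟨hs.1, hs.2.trans hx.2⟩
      have htb : t ∈ Set.Icc (0:ℝ) b := ⟨ht.1, ht.2.trans hy.2⟩
      simp only [hgf]
      rw [Set.projIcc_of_mem ha.le hsa, Set.projIcc_of_mem hb.le htb]
    rw [step1, step2, step3]
  · rintro υ' ⟨hc', he'⟩ x hx y hy
    have hcont' : Continuous fun p : ↥(Set.Icc (0:ℝ) a) × ↥(Set.Icc (0:ℝ) b) =>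
        υ' ↑p.1 ↑p.2 := hc'.comp_continuous hincl (fun p => Set.mk_mem_prod p.1.2 p.2.2)
    set f' : C(↥(Set.Icc (0:ℝ) a) × ↥(Set.Icc (0:ℝ) b), ℝ) :=
      ContinuousMap.mk (fun p => υ' ↑p.1 ↑p.2) hcont' with hf'
    have hfixed' : Function.IsFixedPt T f' := by
      apply ContinuousMap.ext
      rintro ⟨⟨x', hx'⟩, ⟨y', hy'⟩⟩
      have e1 : T f' ((⟨x', hx'⟩, ⟨y', hy'⟩) :
          ↥(Set.Icc (0:ℝ) a) × ↥(Set.Icc (0:ℝ) b))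
          = h x' y' + mixedKatInt ρ₁ ρ₂ φ₁ φ₂ (gf f') x' y' := hTeq f' _
      have e2 : mixedKatInt ρ₁ ρ₂ φ₁ φ₂ (gf f') x' y'
          = mixedKatInt ρ₁ ρ₂ φ₁ φ₂ (fun s t => F s t (υ' s t)) x' y' := by
        apply MK_congr ρ₁ ρ₂ φ₁ φ₂ _ _ hx'.1 hy'.1
        intro s hs t ht
        have hsa : s ∈ Set.Icc (0:ℝ) a := ⟨hs.1, hs.2.trans hx'.2⟩
        have htb : t ∈ Set.Icc (0:ℝ) b := ⟨ht.1, ht.2.trans hy'.2⟩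
        simp only [hgf, hf', ContinuousMap.coe_mk]
        rw [Set.projIcc_of_mem ha.le hsa, Set.projIcc_of_mem hb.le htb]
      have e3 : f' ((⟨x', hx'⟩, ⟨y', hy'⟩) :
          ↥(Set.Icc (0:ℝ) a) × ↥(Set.Icc (0:ℝ) b)) = υ' x' y' := rfl
      rw [e1, e2, e3, ← he' x' hx' y' hy']
    have hff : f' = fstar := hCW.fixedPoint_unique hfixed'
    have : υ' x y = f' ((⟨x, hx⟩, ⟨y, hy⟩) :
        ↥(Set.Icc (0:ℝ) a) × ↥(Set.Icc (0:ℝ) b)) := rfl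
    rw [this, hff]
    simp only [Set.projIcc_of_mem ha.le hx, Set.projIcc_of_mem hb.le hy]
end

section
/- Let ρ₁,ρ₂>0, φ₁,φ₂∈(0,1). Suppose F : [0,a]×[0,b]×ℝ → ℝ is continuous, |F| ≤ M, and h : [0,a]×[0,b] → ℝ is continuous with |h| ≤ k/2. If a^{ρ₁φ₁} b^{ρ₂φ₂} ≤ (k/(2M)) Γ(1+φ₁)Γ(1+φ₂) ρ₁^{φ₁} ρ₂^{φ₂}, then the operator A defined by A(υ)(x,y) = h(x,y) + (ρ₁^{1-φ₁} ρ₂^{1-φ₂})/(Γ(φ₁)Γ(φ₂)) ∫_0^x ∫_0^y s^{ρ₁-1} t^{ρ₂-1} (x^{ρ₁}-s^{ρ₁})^{φ₁-1} (y^{ρ₂}-t^{ρ₂})^{φ₂-1} F(s,t,υ(s,t)) dt ds maps the closed ball {υ ∈ C([0,a]×[0,b],ℝ) : ‖υ‖_∞ ≤ k} into itself. -/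
open Real MeasureTheory

lemma kat_aux (ρ φ x : ℝ) (hρ : 0 < ρ) (hφ : φ ∈ Set.Ioo (0:ℝ) 1) (hx : 0 ≤ x) :
    IntervalIntegrable (fun s => s ^ (ρ - 1) * (x ^ ρ - s ^ ρ) ^ (φ - 1)) volume 0 x ∧
    (∫ s in (0:ℝ)..x, s ^ (ρ - 1) * (x ^ ρ - s ^ ρ) ^ (φ - 1)) = x ^ (ρ * φ) / (ρ * φ) := by
  rcases eq_or_lt_of_le hx with rfl | hx
  · refine ⟨IntervalIntegrable.refl, ?_⟩
    rw [intervalIntegral.integral_same, Real.zero_rpow (mul_pos hρ hφ.1).ne', zero_div]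
  · set g : ℝ → ℝ := fun s => -(x ^ ρ - s ^ ρ) ^ φ / (ρ * φ) with hg
    have hcont : ContinuousOn g (Set.Icc 0 x) := by
      apply ContinuousOn.div_const
      apply ContinuousOn.neg
      apply ContinuousOn.rpow_const
      · exact (continuousOn_const.sub (continuousOn_id.rpow_const fun s _ => Or.inr hρ.le))
      · exact fun s _ => Or.inr hφ.1.le
    have hderiv : ∀ s ∈ Set.Ioo 0 x,
        HasDerivAt g (s ^ (ρ - 1) * (x ^ ρ - s ^ ρ) ^ (φ - 1)) s := by
      intro s hs
      have h1 : HasDerivAt (fun s : ℝ => x ^ ρ - s ^ ρ) (-(ρ * s ^ (ρ - 1))) s := by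
        simpa using (Real.hasDerivAt_rpow_const (p := ρ) (Or.inl hs.1.ne')).const_sub (x ^ ρ)
      have hpos : 0 < x ^ ρ - s ^ ρ := sub_pos.2 (Real.rpow_lt_rpow hs.1.le hs.2 hρ)
      have h2 : HasDerivAt (fun u : ℝ => u ^ φ) (φ * (x ^ ρ - s ^ ρ) ^ (φ - 1)) (x ^ ρ - s ^ ρ) :=
        Real.hasDerivAt_rpow_const (Or.inl hpos.ne')
      have h3 := ((h2.comp s h1).neg).div_const (ρ * φ)
      refine h3.congr_deriv ?_
      rw [show -(φ * (x ^ ρ - s ^ ρ) ^ (φ - 1) * -(ρ * s ^ (ρ - 1)))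
          = (ρ * φ) * (s ^ (ρ - 1) * (x ^ ρ - s ^ ρ) ^ (φ - 1)) by ring,
        mul_div_cancel_left₀ _ (mul_pos hρ hφ.1).ne']
    have hnonneg : ∀ s ∈ Set.Ioo 0 x, 0 ≤ s ^ (ρ - 1) * (x ^ ρ - s ^ ρ) ^ (φ - 1) := by
      intro s hs
      have : (0:ℝ) ≤ x ^ ρ - s ^ ρ := sub_nonneg.2 (Real.rpow_le_rpow hs.1.le hs.2.le hρ.le)
      exact mul_nonneg (Real.rpow_nonneg hs.1.le _) (Real.rpow_nonneg this _)
    have hint : IntervalIntegrable (fun s => s ^ (ρ - 1) * (x ^ ρ - s ^ ρ) ^ (φ - 1))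
        volume 0 x := by
      apply intervalIntegral.intervalIntegrable_deriv_of_nonneg
      · rwa [Set.uIcc_of_le hx.le]
      · intro s hs
        exact hderiv s (by simpa [min_eq_left hx.le, max_eq_right hx.le] using hs)
      · intro s hs
        exact hnonneg s (by simpa [min_eq_left hx.le, max_eq_right hx.le] using hs)
    refine ⟨hint, ?_⟩
    rw [intervalIntegral.integral_eq_sub_of_hasDeriv_right_of_le hx.le hcont
      (fun s hs => (hderiv s hs).hasDerivWithinAt) hint]
    have h0 : g x = 0 := by
      simp [hg, Real.zero_rpow hφ.1.ne']
    have h1 : g 0 = -x ^ (ρ * φ) / (ρ * φ) := by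
      simp only [hg]
      rw [Real.zero_rpow hρ.ne', sub_zero, ← Real.rpow_mul hx.le]
    rw [h0, h1]
    ring

theorem operator_maps_ball_into_itself (ρ₁ ρ₂ φ₁ φ₂ a b M k : ℝ)
    (hρ₁ : 0 < ρ₁) (hρ₂ : 0 < ρ₂)
    (hφ₁ : φ₁ ∈ Set.Ioo (0:ℝ) 1) (hφ₂ : φ₂ ∈ Set.Ioo (0:ℝ) 1)
    (ha : 0 < a) (hb : 0 < b) (hM : 0 < M) (hk : 0 < k)
    (F : ℝ → ℝ → ℝ → ℝ)
    (hF : ContinuousOn (fun p : ℝ × ℝ × ℝ => F p.1 p.2.1 p.2.2)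
      (Set.Icc 0 a ×ˢ Set.Icc 0 b ×ˢ Set.univ))
    (hFbound : ∀ x y u : ℝ, |F x y u| ≤ M)
    (h : ℝ → ℝ → ℝ)
    (hh : ContinuousOn (fun p : ℝ × ℝ => h p.1 p.2) (Set.Icc 0 a ×ˢ Set.Icc 0 b))
    (hhbound : ∀ x ∈ Set.Icc (0:ℝ) a, ∀ y ∈ Set.Icc (0:ℝ) b, |h x y| ≤ k / 2)
    (hsmall : a ^ (ρ₁ * φ₁) * b ^ (ρ₂ * φ₂)
      ≤ k / (2 * M) * Real.Gamma (1 + φ₁) * Real.Gamma (1 + φ₂) * ρ₁ ^ φ₁ * ρ₂ ^ φ₂) :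
    ∀ υ : ℝ → ℝ → ℝ,
      ContinuousOn (fun p : ℝ × ℝ => υ p.1 p.2) (Set.Icc 0 a ×ˢ Set.Icc 0 b) →
      (∀ x ∈ Set.Icc (0:ℝ) a, ∀ y ∈ Set.Icc (0:ℝ) b, |υ x y| ≤ k) →
      ∀ x ∈ Set.Icc (0:ℝ) a, ∀ y ∈ Set.Icc (0:ℝ) b,
        |h x y + mixedKatInt ρ₁ ρ₂ φ₁ φ₂ (fun s t => F s t (υ s t)) x y| ≤ k := by
  intro υ hυc hυb x hx y hy
  obtain ⟨hφ₁0, hφ₁1⟩ := hφ₁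
  obtain ⟨hφ₂0, hφ₂1⟩ := hφ₂
  have hΓ₁ := Real.Gamma_pos_of_pos hφ₁0
  have hΓ₂ := Real.Gamma_pos_of_pos hφ₂0
  obtain ⟨hint₁, hval₁⟩ := kat_aux ρ₁ φ₁ x hρ₁ ⟨hφ₁0, hφ₁1⟩ hx.1
  obtain ⟨hint₂, hval₂⟩ := kat_aux ρ₂ φ₂ y hρ₂ ⟨hφ₂0, hφ₂1⟩ hy.1
  set K₂ : ℝ := M * (y ^ (ρ₂ * φ₂) / (ρ₂ * φ₂)) with hK₂
  have hK₂0 : 0 ≤ K₂ :=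
    mul_nonneg hM.le (div_nonneg (Real.rpow_nonneg hy.1 _) (by positivity))
  have inner : ∀ s ∈ Set.Ioc (0:ℝ) x,
      |∫ t in (0:ℝ)..y, s ^ (ρ₁ - 1) * t ^ (ρ₂ - 1) * (x ^ ρ₁ - s ^ ρ₁) ^ (φ₁ - 1) *
        (y ^ ρ₂ - t ^ ρ₂) ^ (φ₂ - 1) * F s t (υ s t)|
        ≤ K₂ * (s ^ (ρ₁ - 1) * (x ^ ρ₁ - s ^ ρ₁) ^ (φ₁ - 1)) := by
    intro s hs
    have hCs : 0 ≤ s ^ (ρ₁ - 1) * (x ^ ρ₁ - s ^ ρ₁) ^ (φ₁ - 1) :=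
      mul_nonneg (Real.rpow_nonneg hs.1.le _)
        (Real.rpow_nonneg (sub_nonneg.2 (Real.rpow_le_rpow hs.1.le hs.2 hρ₁.le)) _)
    have hbd : ∀ᵐ t ∂(volume.restrict (Set.uIoc (0:ℝ) y)),
        ‖s ^ (ρ₁ - 1) * t ^ (ρ₂ - 1) * (x ^ ρ₁ - s ^ ρ₁) ^ (φ₁ - 1) *
          (y ^ ρ₂ - t ^ ρ₂) ^ (φ₂ - 1) * F s t (υ s t)‖
          ≤ (s ^ (ρ₁ - 1) * (x ^ ρ₁ - s ^ ρ₁) ^ (φ₁ - 1) * M) *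
            (t ^ (ρ₂ - 1) * (y ^ ρ₂ - t ^ ρ₂) ^ (φ₂ - 1)) := by
      filter_upwards [ae_restrict_mem measurableSet_uIoc] with t ht
      rw [Set.uIoc_of_le hy.1] at ht
      have h1 : 0 ≤ t ^ (ρ₂ - 1) * (y ^ ρ₂ - t ^ ρ₂) ^ (φ₂ - 1) :=
        mul_nonneg (Real.rpow_nonneg ht.1.le _)
          (Real.rpow_nonneg (sub_nonneg.2 (Real.rpow_le_rpow ht.1.le ht.2 hρ₂.le)) _)
      have hA0 : 0 ≤ s ^ (ρ₁ - 1) * t ^ (ρ₂ - 1) * (x ^ ρ₁ - s ^ ρ₁) ^ (φ₁ - 1) *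
          (y ^ ρ₂ - t ^ ρ₂) ^ (φ₂ - 1) := by
        calc (0:ℝ) ≤ (s ^ (ρ₁ - 1) * (x ^ ρ₁ - s ^ ρ₁) ^ (φ₁ - 1)) *
              (t ^ (ρ₂ - 1) * (y ^ ρ₂ - t ^ ρ₂) ^ (φ₂ - 1)) := mul_nonneg hCs h1
          _ = _ := by ring
      rw [Real.norm_eq_abs, abs_mul, abs_of_nonneg hA0]
      calc s ^ (ρ₁ - 1) * t ^ (ρ₂ - 1) * (x ^ ρ₁ - s ^ ρ₁) ^ (φ₁ - 1) *
            (y ^ ρ₂ - t ^ ρ₂) ^ (φ₂ - 1) * |F s t (υ s t)|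
          ≤ s ^ (ρ₁ - 1) * t ^ (ρ₂ - 1) * (x ^ ρ₁ - s ^ ρ₁) ^ (φ₁ - 1) *
            (y ^ ρ₂ - t ^ ρ₂) ^ (φ₂ - 1) * M :=
            mul_le_mul_of_nonneg_left (hFbound s t _) hA0
        _ = (s ^ (ρ₁ - 1) * (x ^ ρ₁ - s ^ ρ₁) ^ (φ₁ - 1) * M) *
            (t ^ (ρ₂ - 1) * (y ^ ρ₂ - t ^ ρ₂) ^ (φ₂ - 1)) := by ring
    have hgint : IntervalIntegrable
        (fun t => (s ^ (ρ₁ - 1) * (x ^ ρ₁ - s ^ ρ₁) ^ (φ₁ - 1) * M) *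
          (t ^ (ρ₂ - 1) * (y ^ ρ₂ - t ^ ρ₂) ^ (φ₂ - 1))) volume 0 y :=
      hint₂.const_mul _
    have hle := intervalIntegral.norm_integral_le_abs_of_norm_le hbd hgint
    rw [intervalIntegral.integral_const_mul, hval₂, Real.norm_eq_abs,
      abs_of_nonneg (mul_nonneg (mul_nonneg hCs hM.le)
        (div_nonneg (Real.rpow_nonneg hy.1 _) (by positivity)))] at hle
    calc |∫ t in (0:ℝ)..y, s ^ (ρ₁ - 1) * t ^ (ρ₂ - 1) * (x ^ ρ₁ - s ^ ρ₁) ^ (φ₁ - 1) *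
          (y ^ ρ₂ - t ^ ρ₂) ^ (φ₂ - 1) * F s t (υ s t)|
        ≤ s ^ (ρ₁ - 1) * (x ^ ρ₁ - s ^ ρ₁) ^ (φ₁ - 1) * M * (y ^ (ρ₂ * φ₂) / (ρ₂ * φ₂)) := hle
      _ = K₂ * (s ^ (ρ₁ - 1) * (x ^ ρ₁ - s ^ ρ₁) ^ (φ₁ - 1)) := by rw [hK₂]; ring
  have outer : |∫ s in (0:ℝ)..x, ∫ t in (0:ℝ)..y,
      s ^ (ρ₁ - 1) * t ^ (ρ₂ - 1) * (x ^ ρ₁ - s ^ ρ₁) ^ (φ₁ - 1) *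
        (y ^ ρ₂ - t ^ ρ₂) ^ (φ₂ - 1) * F s t (υ s t)|
      ≤ K₂ * (x ^ (ρ₁ * φ₁) / (ρ₁ * φ₁)) := by
    have hbd : ∀ᵐ s ∂(volume.restrict (Set.uIoc (0:ℝ) x)),
        ‖∫ t in (0:ℝ)..y, s ^ (ρ₁ - 1) * t ^ (ρ₂ - 1) * (x ^ ρ₁ - s ^ ρ₁) ^ (φ₁ - 1) *
          (y ^ ρ₂ - t ^ ρ₂) ^ (φ₂ - 1) * F s t (υ s t)‖
          ≤ K₂ * (s ^ (ρ₁ - 1) * (x ^ ρ₁ - s ^ ρ₁) ^ (φ₁ - 1)) := by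
      filter_upwards [ae_restrict_mem measurableSet_uIoc] with s hs
      rw [Set.uIoc_of_le hx.1] at hs
      rw [Real.norm_eq_abs]
      exact inner s hs
    have hle := intervalIntegral.norm_integral_le_abs_of_norm_le hbd (hint₁.const_mul K₂)
    rwa [intervalIntegral.integral_const_mul, hval₁, Real.norm_eq_abs,
      abs_of_nonneg (mul_nonneg hK₂0
        (div_nonneg (Real.rpow_nonneg hx.1 _) (by positivity)))] at hle
  have hIbound : |mixedKatInt ρ₁ ρ₂ φ₁ φ₂ (fun s t => F s t (υ s t)) x y| ≤ k / 2 := by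
    have hc0 : 0 ≤ (ρ₁ ^ (1 - φ₁) * ρ₂ ^ (1 - φ₂)) / (Real.Gamma φ₁ * Real.Gamma φ₂) :=
      div_nonneg (mul_nonneg (Real.rpow_nonneg hρ₁.le _) (Real.rpow_nonneg hρ₂.le _))
        (mul_nonneg hΓ₁.le hΓ₂.le)
    simp only [mixedKatInt]
    rw [abs_mul, abs_of_nonneg hc0]
    refine le_trans (mul_le_mul_of_nonneg_left outer hc0) ?_
    have hxA : x ^ (ρ₁ * φ₁) ≤ a ^ (ρ₁ * φ₁) :=
      Real.rpow_le_rpow hx.1 hx.2 (by positivity)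
    have hyB : y ^ (ρ₂ * φ₂) ≤ b ^ (ρ₂ * φ₂) :=
      Real.rpow_le_rpow hy.1 hy.2 (by positivity)
    have hΓe₁ : Real.Gamma (1 + φ₁) = φ₁ * Real.Gamma φ₁ := by
      rw [add_comm, Real.Gamma_add_one hφ₁0.ne']
    have hΓe₂ : Real.Gamma (1 + φ₂) = φ₂ * Real.Gamma φ₂ := by
      rw [add_comm, Real.Gamma_add_one hφ₂0.ne']
    have key : M * (x ^ (ρ₁ * φ₁) * y ^ (ρ₂ * φ₂))
        ≤ k / 2 * ((φ₁ * Real.Gamma φ₁) * (φ₂ * Real.Gamma φ₂) * ρ₁ ^ φ₁ * ρ₂ ^ φ₂) := by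
      have h1 : x ^ (ρ₁ * φ₁) * y ^ (ρ₂ * φ₂) ≤ a ^ (ρ₁ * φ₁) * b ^ (ρ₂ * φ₂) :=
        mul_le_mul hxA hyB (Real.rpow_nonneg hy.1 _) (Real.rpow_nonneg ha.le _)
      have h2 := mul_le_mul_of_nonneg_left (h1.trans hsmall) hM.le
      rw [hΓe₁, hΓe₂] at h2
      refine h2.trans (le_of_eq ?_)
      field_simp
    have hρφ₁ : (0:ℝ) < ρ₁ ^ φ₁ := Real.rpow_pos_of_pos hρ₁ _
    have hρφ₂ : (0:ℝ) < ρ₂ ^ φ₂ := Real.rpow_pos_of_pos hρ₂ _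
    have hr₁ : ρ₁ ^ (1 - φ₁) = ρ₁ / ρ₁ ^ φ₁ := by
      rw [Real.rpow_sub hρ₁, Real.rpow_one]
    have hr₂ : ρ₂ ^ (1 - φ₂) = ρ₂ / ρ₂ ^ φ₂ := by
      rw [Real.rpow_sub hρ₂, Real.rpow_one]
    have hEq : (ρ₁ ^ (1 - φ₁) * ρ₂ ^ (1 - φ₂)) / (Real.Gamma φ₁ * Real.Gamma φ₂) *
        (K₂ * (x ^ (ρ₁ * φ₁) / (ρ₁ * φ₁)))
        = M * (x ^ (ρ₁ * φ₁) * y ^ (ρ₂ * φ₂)) /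
          ((φ₁ * Real.Gamma φ₁) * (φ₂ * Real.Gamma φ₂) * ρ₁ ^ φ₁ * ρ₂ ^ φ₂) := by
      rw [hK₂, hr₁, hr₂]
      field_simp
    rw [hEq, div_le_iff₀ (by positivity)]
    exact key
  calc |h x y + mixedKatInt ρ₁ ρ₂ φ₁ φ₂ (fun s t => F s t (υ s t)) x y|
      ≤ |h x y| + |mixedKatInt ρ₁ ρ₂ φ₁ φ₂ (fun s t => F s t (υ s t)) x y| := abs_add_le _ _
    _ ≤ k / 2 + k / 2 := add_le_add (hhbound x hx y hy) hIbound
    _ = k := by ring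
end

section
/- Let ρ>0 and φ∈(0,1). The function (x,y) ↦ x^{ρφ} y^{ρφ} is uniformly continuous on [0,a]×[0,b], and consequently the family {A(υ) : ‖υ‖_∞ ≤ k} of functions A(υ)(x,y) = I_{0+}^{(φ,φ),(ρ,ρ)}[F(·,·,υ)](x,y), with F continuous and bounded by M on [0,a]×[0,b]×[−k,k], is uniformly equicontinuous. -/
/-!
With `k_x(s) = s^(ρ-1) (x^ρ - s^ρ)^(φ-1)`, the mixed integral is an iterated one-dimensional
integral `∫₀ˣ k_x(s) (∫₀ʸ k_y(t) μ(s,t) dt) ds`. The kernel is nonnegative, decreasing in `x`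
(as `φ < 1`), and has the primitive `-(x^ρ - s^ρ)^φ / (ρφ)`. So for `|g| ≤ M` the integral
`∫₀ˣ k_x g` changes by at most `2M |x^ρ - x'^ρ|^φ / (ρφ)` when `x` moves to `x'`. Applied in each
variable this bounds `|A(υ)(p) - A(υ)(q)|` by a continuous function of `(p, q)` that vanishes on
the diagonal and does not depend on `υ`; its uniform continuity on the compact rectangle gives
the common `δ`. The modulus is only Hölder of order `φ` in `x^ρ`: a bound by
`x₂^{ρφ} y₂^{ρφ} - x₁^{ρφ} y₁^{ρφ}` fails for sign-changing integrands.
-/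

open Real MeasureTheory

open Set intervalIntegral

noncomputable section

def katKernel (ρ φ x s : ℝ) : ℝ := s ^ (ρ - 1) * (x ^ ρ - s ^ ρ) ^ (φ - 1)

def katInt (ρ φ : ℝ) (g : ℝ → ℝ) (x : ℝ) : ℝ := ∫ s in (0:ℝ)..x, katKernel ρ φ x s * g s

def katModulus (ρ φ : ℝ) (p q : ℝ × ℝ) : ℝ :=
  (p.1 ^ ρ) ^ φ * |p.2 ^ ρ - q.2 ^ ρ| ^ φ + (q.2 ^ ρ) ^ φ * |p.1 ^ ρ - q.1 ^ ρ| ^ φ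

end

variable {ρ φ : ℝ}

theorem mixedKatInt_eq_katInt (μ : ℝ → ℝ → ℝ) (x y : ℝ) :
    mixedKatInt ρ ρ φ φ μ x y = ρ ^ (1 - φ) * ρ ^ (1 - φ) / (Gamma φ * Gamma φ) *
      katInt ρ φ (fun s => katInt ρ φ (μ s) y) x := by
  unfold mixedKatInt katInt
  congr 1
  refine integral_congr fun s _ => ?_
  rw [← intervalIntegral.integral_const_mul]
  refine integral_congr fun t _ => ?_
  unfold katKernel
  ring

theorem katKernel_nonneg (hρ : 0 ≤ ρ) {x s : ℝ} (hs : 0 ≤ s) (hsx : s ≤ x) :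
    0 ≤ katKernel ρ φ x s :=
  mul_nonneg (rpow_nonneg hs _) (rpow_nonneg (sub_nonneg.2 (rpow_le_rpow hs hsx hρ)) _)

theorem katKernel_le_of_le (hρ : 0 < ρ) (hφ : φ ≤ 1) {x₁ x₂ s : ℝ} (hs : 0 ≤ s) (hsx : s < x₁)
    (hx : x₁ ≤ x₂) : katKernel ρ φ x₂ s ≤ katKernel ρ φ x₁ s := by
  refine mul_le_mul_of_nonneg_left (rpow_le_rpow_of_nonpos ?_ ?_ (by linarith)) (rpow_nonneg hs _)
  · exact sub_pos.2 (rpow_lt_rpow hs hsx hρ)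
  · linarith [rpow_le_rpow (hs.trans hsx.le) hx hρ.le]

theorem hasDerivAt_katKernel_primitive (hρ : 0 < ρ) (hφ : 0 < φ) {x s : ℝ} (hs : 0 < s)
    (hsx : s < x) : HasDerivAt (fun s => -(x ^ ρ - s ^ ρ) ^ φ / (ρ * φ)) (katKernel ρ φ x s) s := by
  have hbase : x ^ ρ - s ^ ρ ≠ 0 := (sub_pos.2 (rpow_lt_rpow hs.le hsx hρ)).ne'
  refine ((((hasDerivAt_rpow_const (Or.inl hs.ne')).const_sub (x ^ ρ)).rpow_const
    (Or.inl hbase)).fun_neg.div_const (ρ * φ)).congr_deriv ?_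
  unfold katKernel
  field_simp

theorem continuous_katKernel_primitive (hρ : 0 < ρ) (hφ : 0 < φ) (x : ℝ) :
    Continuous (fun s => -(x ^ ρ - s ^ ρ) ^ φ / (ρ * φ)) :=
  ((continuous_const.sub (continuous_rpow_const hρ.le)).rpow_const
    fun _ => Or.inr hφ.le).neg.div_const _

theorem intervalIntegrable_katKernel (hρ : 0 < ρ) (hφ : 0 < φ) {x w₁ w₂ : ℝ} (h₀ : 0 ≤ w₁)
    (h₁₂ : w₁ ≤ w₂) (h₂ : w₂ ≤ x) : IntervalIntegrable (katKernel ρ φ x) volume w₁ w₂ := by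
  refine intervalIntegrable_deriv_of_nonneg (continuous_katKernel_primitive hρ hφ x).continuousOn
    (fun s hs => ?_) (fun s hs => ?_)
  all_goals rw [min_eq_left h₁₂, max_eq_right h₁₂] at hs
  · exact hasDerivAt_katKernel_primitive hρ hφ (h₀.trans_lt hs.1) (hs.2.trans_le h₂)
  · exact katKernel_nonneg hρ.le (h₀.trans hs.1.le) (hs.2.le.trans h₂)

theorem integral_katKernel (hρ : 0 < ρ) (hφ : 0 < φ) {x w₁ w₂ : ℝ} (h₀ : 0 ≤ w₁)
    (h₁₂ : w₁ ≤ w₂) (h₂ : w₂ ≤ x) :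
    ∫ s in w₁..w₂, katKernel ρ φ x s = ((x ^ ρ - w₁ ^ ρ) ^ φ - (x ^ ρ - w₂ ^ ρ) ^ φ) / (ρ * φ) := by
  rw [integral_eq_sub_of_hasDerivAt_of_le h₁₂ (continuous_katKernel_primitive hρ hφ x).continuousOn
    (fun s hs => hasDerivAt_katKernel_primitive hρ hφ (h₀.trans_lt hs.1) (hs.2.trans_le h₂))
    (intervalIntegrable_katKernel hρ hφ h₀ h₁₂ h₂)]
  ring

theorem measurable_katKernel (ρ φ x : ℝ) : Measurable (katKernel ρ φ x) := by
  unfold katKernel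
  fun_prop

section OneDim

variable {g : ℝ → ℝ} {M a : ℝ}

theorem norm_katKernel_mul_le (hρ : 0 ≤ ρ) (hgM : ∀ s ∈ Icc 0 a, |g s| ≤ M) {x s : ℝ}
    (hs : s ∈ Icc 0 x) (hxa : x ≤ a) : ‖katKernel ρ φ x s * g s‖ ≤ M * katKernel ρ φ x s := by
  have hks := katKernel_nonneg (φ := φ) hρ hs.1 hs.2
  rw [norm_mul, Real.norm_of_nonneg hks, mul_comm]
  exact mul_le_mul_of_nonneg_right (hgM s ⟨hs.1, hs.2.trans hxa⟩) hks

theorem intervalIntegrable_katKernel_mul (hρ : 0 < ρ) (hφ : 0 < φ) (hg : Measurable g)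
    (hgM : ∀ s ∈ Icc 0 a, |g s| ≤ M) {x w₁ w₂ : ℝ} (h₀ : 0 ≤ w₁) (h₁₂ : w₁ ≤ w₂) (h₂ : w₂ ≤ x)
    (hxa : x ≤ a) : IntervalIntegrable (fun s => katKernel ρ φ x s * g s) volume w₁ w₂ := by
  refine ((intervalIntegrable_katKernel hρ hφ h₀ h₁₂ h₂).const_mul M).mono_fun'
    ((measurable_katKernel ρ φ x).mul hg).aestronglyMeasurable ?_
  rw [uIoc_of_le h₁₂]
  refine (ae_restrict_iff' measurableSet_Ioc).2 (ae_of_all _ fun s hs => ?_)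
  exact norm_katKernel_mul_le hρ.le hgM ⟨h₀.trans hs.1.le, hs.2.trans h₂⟩ hxa

theorem abs_integral_katKernel_mul_le (hρ : 0 < ρ) (hφ : 0 < φ)
    (hgM : ∀ s ∈ Icc 0 a, |g s| ≤ M) {x w₁ w₂ : ℝ} (h₀ : 0 ≤ w₁) (h₁₂ : w₁ ≤ w₂) (h₂ : w₂ ≤ x)
    (hxa : x ≤ a) :
    |∫ s in w₁..w₂, katKernel ρ φ x s * g s| ≤
      M * ((x ^ ρ - w₁ ^ ρ) ^ φ - (x ^ ρ - w₂ ^ ρ) ^ φ) / (ρ * φ) := by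
  rw [mul_div_assoc, ← integral_katKernel hρ hφ h₀ h₁₂ h₂, ← intervalIntegral.integral_const_mul,
    ← Real.norm_eq_abs]
  refine norm_integral_le_of_norm_le h₁₂ (ae_of_all _ fun s hs => ?_)
    ((intervalIntegrable_katKernel hρ hφ h₀ h₁₂ h₂).const_mul M)
  exact norm_katKernel_mul_le hρ.le hgM ⟨h₀.trans hs.1.le, hs.2.trans h₂⟩ hxa

theorem abs_katInt_le (hρ : 0 < ρ) (hφ : 0 < φ) (hgM : ∀ s ∈ Icc 0 a, |g s| ≤ M) {x : ℝ}
    (hx : x ∈ Icc 0 a) :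
    |katInt ρ φ g x| ≤ M * (x ^ ρ) ^ φ / (ρ * φ) := by
  simpa [katInt, zero_rpow hρ.ne', zero_rpow hφ.ne'] using
    abs_integral_katKernel_mul_le hρ hφ hgM le_rfl hx.1 le_rfl hx.2

theorem abs_katInt_sub_le_of_le (hρ : 0 < ρ) (hφ : φ ∈ Ioo 0 1) (hg : Measurable g)
    (hgM : ∀ s ∈ Icc 0 a, |g s| ≤ M) {x₁ x₂ : ℝ} (h₀ : 0 ≤ x₁) (h₁₂ : x₁ ≤ x₂) (h₂ : x₂ ≤ a) :
    |katInt ρ φ g x₂ - katInt ρ φ g x₁| ≤ 2 * M * (x₂ ^ ρ - x₁ ^ ρ) ^ φ / (ρ * φ) := by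
  obtain ⟨hφ₀, hφ₁⟩ := hφ
  have hM : 0 ≤ M := (abs_nonneg _).trans (hgM 0 ⟨le_rfl, h₀.trans (h₁₂.trans h₂)⟩)
  have ik₁ := intervalIntegrable_katKernel (x := x₁) hρ hφ₀ le_rfl h₀ le_rfl
  have ik₂ := intervalIntegrable_katKernel (x := x₂) hρ hφ₀ le_rfl h₀ h₁₂
  have ig₁ := intervalIntegrable_katKernel_mul hρ hφ₀ hg hgM le_rfl h₀ le_rfl (h₁₂.trans h₂)
  have ig₂ := intervalIntegrable_katKernel_mul hρ hφ₀ hg hgM le_rfl h₀ h₁₂ h₂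
  have ig₃ := intervalIntegrable_katKernel_mul hρ hφ₀ hg hgM h₀ h₁₂ le_rfl h₂
  have far := abs_integral_katKernel_mul_le hρ hφ₀ hgM h₀ h₁₂ le_rfl h₂
  have split : katInt ρ φ g x₂ - katInt ρ φ g x₁ =
      (∫ s in 0..x₁, (katKernel ρ φ x₂ s - katKernel ρ φ x₁ s) * g s) +
        ∫ s in x₁..x₂, katKernel ρ φ x₂ s * g s := by
    simp_rw [katInt, sub_mul, integral_sub ig₂ ig₁, ← integral_add_adjacent_intervals ig₂ ig₃]
    ring
  -- `|k_{x₂} - k_{x₁}| = k_{x₁} - k_{x₂}` on `[0, x₁)`; at `s = x₁` the junk value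
  -- `0 ^ (φ - 1) = 0` breaks this, hence `ae_ne`
  have near : |∫ s in 0..x₁, (katKernel ρ φ x₂ s - katKernel ρ φ x₁ s) * g s| ≤
      M * ((x₁ ^ ρ) ^ φ - (x₂ ^ ρ) ^ φ + (x₂ ^ ρ - x₁ ^ ρ) ^ φ) / (ρ * φ) := by
    have hint : ∫ s in 0..x₁, M * (katKernel ρ φ x₁ s - katKernel ρ φ x₂ s) =
        M * ((x₁ ^ ρ) ^ φ - (x₂ ^ ρ) ^ φ + (x₂ ^ ρ - x₁ ^ ρ) ^ φ) / (ρ * φ) := by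
      rw [intervalIntegral.integral_const_mul, integral_sub ik₁ ik₂,
        integral_katKernel hρ hφ₀ le_rfl h₀ le_rfl, integral_katKernel hρ hφ₀ le_rfl h₀ h₁₂]
      simp only [zero_rpow hρ.ne', sub_zero, sub_self, zero_rpow hφ₀.ne']
      ring
    rw [← hint, ← Real.norm_eq_abs]
    refine norm_integral_le_of_norm_le h₀ ?_ ((ik₁.sub ik₂).const_mul M)
    filter_upwards [volume.ae_ne x₁] with s hne hs
    have hle := katKernel_le_of_le hρ hφ₁.le hs.1.le (lt_of_le_of_ne hs.2 hne) h₁₂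
    rw [norm_mul, Real.norm_of_nonpos (sub_nonpos.2 hle), neg_sub, mul_comm]
    exact mul_le_mul_of_nonneg_right (hgM s ⟨hs.1.le, hs.2.trans (h₁₂.trans h₂)⟩)
      (sub_nonneg.2 hle)
  have hmono : (x₁ ^ ρ) ^ φ ≤ (x₂ ^ ρ) ^ φ :=
    rpow_le_rpow (rpow_nonneg h₀ _) (rpow_le_rpow h₀ h₁₂ hρ.le) hφ₀.le
  rw [split]
  calc _ ≤ _ := abs_add_le _ _
    _ ≤ _ := add_le_add near far
    _ ≤ 2 * M * (x₂ ^ ρ - x₁ ^ ρ) ^ φ / (ρ * φ) := by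
      simp only [sub_self, zero_rpow hφ₀.ne', sub_zero]
      rw [← add_div, div_le_div_iff_of_pos_right (by positivity)]
      nlinarith

theorem abs_katInt_sub_le (hρ : 0 < ρ) (hφ : φ ∈ Ioo 0 1) (hg : Measurable g)
    (hgM : ∀ s ∈ Icc 0 a, |g s| ≤ M) {x x' : ℝ} (hx : x ∈ Icc 0 a) (hx' : x' ∈ Icc 0 a) :
    |katInt ρ φ g x - katInt ρ φ g x'| ≤ 2 * M * |x ^ ρ - x' ^ ρ| ^ φ / (ρ * φ) := by
  rcases le_total x x' with h | h
  · rw [abs_sub_comm, abs_sub_comm (x ^ ρ),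
      abs_of_nonneg (sub_nonneg.2 (rpow_le_rpow hx.1 h hρ.le))]
    exact abs_katInt_sub_le_of_le hρ hφ hg hgM hx.1 h hx'.2
  · rw [abs_of_nonneg (sub_nonneg.2 (rpow_le_rpow hx'.1 h hρ.le))]
    exact abs_katInt_sub_le_of_le hρ hφ hg hgM hx'.1 h hx.2

end OneDim

theorem measurable_katInt_of_uncurry {μ : ℝ → ℝ → ℝ} (hμ : Measurable (Function.uncurry μ))
    (y : ℝ) : Measurable fun s => katInt ρ φ (μ s) y := by
  have h := (((measurable_katKernel ρ φ y).comp measurable_snd).mul hμ).stronglyMeasurable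
  exact (h.integral_prod_right' (ν := volume.restrict (Ioc 0 y))).measurable.sub
    (h.integral_prod_right' (ν := volume.restrict (Ioc y 0))).measurable

theorem abs_katInt_katInt_sub_le (hρ : 0 < ρ) (hφ : φ ∈ Ioo 0 1) {μ : ℝ → ℝ → ℝ} {M a b : ℝ}
    (hμ : Measurable (Function.uncurry μ)) (hμM : ∀ s ∈ Icc 0 a, ∀ t ∈ Icc 0 b, |μ s t| ≤ M)
    {p q : ℝ × ℝ} (hp : p ∈ Icc 0 a ×ˢ Icc 0 b) (hq : q ∈ Icc 0 a ×ˢ Icc 0 b) :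
    |katInt ρ φ (fun s => katInt ρ φ (μ s) p.2) p.1 -
        katInt ρ φ (fun s => katInt ρ φ (μ s) q.2) q.1| ≤
      2 * M / (ρ * φ) ^ 2 * katModulus ρ φ p q := by
  set L : ℝ → ℝ → ℝ := fun y s => katInt ρ φ (μ s) y
  have hL : ∀ y, Measurable (L y) := measurable_katInt_of_uncurry hμ
  have hLM : ∀ y ∈ Icc 0 b, ∀ s ∈ Icc 0 a, |L y s| ≤ M * (y ^ ρ) ^ φ / (ρ * φ) :=
    fun y hy s hs => abs_katInt_le hρ hφ.1 (hμM s hs) hy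
  have hLsub : ∀ s ∈ Icc 0 a, |L p.2 s - L q.2 s| ≤ 2 * M * |p.2 ^ ρ - q.2 ^ ρ| ^ φ / (ρ * φ) :=
    fun s hs => abs_katInt_sub_le hρ hφ (hμ.comp measurable_prodMk_left) (hμM s hs) hp.2 hq.2
  have inner : |katInt ρ φ (L p.2) p.1 - katInt ρ φ (L q.2) p.1| ≤
      2 * M * |p.2 ^ ρ - q.2 ^ ρ| ^ φ / (ρ * φ) * (p.1 ^ ρ) ^ φ / (ρ * φ) := by
    have hsub : katInt ρ φ (L p.2) p.1 - katInt ρ φ (L q.2) p.1 =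
        katInt ρ φ (fun s => L p.2 s - L q.2 s) p.1 := by
      simp_rw [katInt, mul_sub]
      exact (intervalIntegral.integral_sub
        (intervalIntegrable_katKernel_mul hρ hφ.1 (hL _) (hLM _ hp.2) le_rfl hp.1.1 le_rfl hp.1.2)
        (intervalIntegrable_katKernel_mul hρ hφ.1 (hL _) (hLM _ hq.2) le_rfl hp.1.1 le_rfl
          hp.1.2)).symm
    rw [hsub]
    exact abs_katInt_le hρ hφ.1 hLsub hp.1
  have outer : |katInt ρ φ (L q.2) p.1 - katInt ρ φ (L q.2) q.1| ≤
      2 * (M * (q.2 ^ ρ) ^ φ / (ρ * φ)) * |p.1 ^ ρ - q.1 ^ ρ| ^ φ / (ρ * φ) :=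
    abs_katInt_sub_le hρ hφ (hL _) (hLM q.2 hq.2) hp.1 hq.1
  calc _ ≤ _ := abs_sub_le _ (katInt ρ φ (L q.2) p.1) _
    _ ≤ _ := add_le_add inner outer
    _ = 2 * M / (ρ * φ) ^ 2 * katModulus ρ φ p q := by
      unfold katModulus
      ring

theorem continuous_katModulus (hρ : 0 ≤ ρ) (hφ : 0 ≤ φ) :
    Continuous (Function.uncurry (katModulus ρ φ)) := by
  have hpow : Continuous fun x : ℝ => x ^ ρ := continuous_rpow_const hρ
  have hpow' : Continuous fun x : ℝ => x ^ φ := continuous_rpow_const hφ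
  unfold katModulus Function.uncurry
  fun_prop

theorem katModulus_self (hφ : φ ≠ 0) (p : ℝ × ℝ) : katModulus ρ φ p p = 0 := by
  simp [katModulus, zero_rpow hφ]

theorem IsCompact.exists_pos_forall_dist_lt_imp_lt {X : Type*} [PseudoMetricSpace X] {K : Set X}
    (hK : IsCompact K) {ω : X → X → ℝ} (hω : Continuous (Function.uncurry ω))
    (hdiag : ∀ p ∈ K, ω p p = 0) {ε : ℝ} (hε : 0 < ε) :
    ∃ δ > 0, ∀ p ∈ K, ∀ q ∈ K, dist p q < δ → ω p q < ε := by
  obtain ⟨δ, hδ, hω⟩ := Metric.uniformContinuousOn_iff.1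
    ((hK.prod hK).uniformContinuousOn_of_continuous hω.continuousOn) ε hε
  refine ⟨δ, hδ, fun p hp q hq hpq => ?_⟩
  have h := hω (p, q) ⟨hp, hq⟩ (p, p) ⟨hp, hp⟩ (by simpa [Prod.dist_eq, dist_comm] using hpq)
  rw [Real.dist_eq, Function.uncurry_apply_pair, Function.uncurry_apply_pair, hdiag p hp,
    sub_zero] at h
  exact (le_abs_self _).trans_lt h

theorem uniform_equicontinuity_of_family_general (ρ φ a b M k : ℝ)
    (hρ : 0 < ρ) (hφ : φ ∈ Set.Ioo (0:ℝ) 1)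
    (F : ℝ → ℝ → ℝ → ℝ)
    (hF : Continuous (fun p : ℝ × ℝ × ℝ => F p.1 p.2.1 p.2.2))
    (hFbound : ∀ x ∈ Set.Icc (0:ℝ) a, ∀ y ∈ Set.Icc (0:ℝ) b, ∀ u ∈ Set.Icc (-k) k,
      |F x y u| ≤ M) :
    UniformContinuousOn (fun p : ℝ × ℝ => p.1 ^ (ρ * φ) * p.2 ^ (ρ * φ))
      (Set.Icc 0 a ×ˢ Set.Icc 0 b) ∧
    ∀ ε > (0:ℝ), ∃ δ > (0:ℝ), ∀ υ : ℝ → ℝ → ℝ,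
      Continuous (fun p : ℝ × ℝ => υ p.1 p.2) →
      (∀ x ∈ Set.Icc (0:ℝ) a, ∀ y ∈ Set.Icc (0:ℝ) b, |υ x y| ≤ k) →
      ∀ p ∈ Set.Icc (0:ℝ) a ×ˢ Set.Icc (0:ℝ) b,
        ∀ q ∈ Set.Icc (0:ℝ) a ×ˢ Set.Icc (0:ℝ) b,
          dist p q < δ →
            |mixedKatInt ρ ρ φ φ (fun s t => F s t (υ s t)) p.1 p.2 -
              mixedKatInt ρ ρ φ φ (fun s t => F s t (υ s t)) q.1 q.2| < ε := by
  have hρφ : 0 ≤ ρ * φ := mul_nonneg hρ.le hφ.1.le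
  refine ⟨(isCompact_Icc.prod isCompact_Icc).uniformContinuousOn_of_continuous
    (((continuous_rpow_const hρφ).comp continuous_fst).mul
      ((continuous_rpow_const hρφ).comp continuous_snd)).continuousOn, fun ε hε => ?_⟩
  set c := ρ ^ (1 - φ) * ρ ^ (1 - φ) / (Gamma φ * Gamma φ)
  obtain ⟨δ, hδ, hmod⟩ := (isCompact_Icc.prod isCompact_Icc).exists_pos_forall_dist_lt_imp_lt
    (ω := fun p q => |c| * (2 * M / (ρ * φ) ^ 2 * katModulus ρ φ p q))
    (((continuous_katModulus hρ.le hφ.1.le).const_mul _).const_mul _)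
    (fun p _ => by simp [katModulus_self hφ.1.ne']) hε
  refine ⟨δ, hδ, fun υ hυ hυk p hp q hq hpq => ?_⟩
  have hμ : Measurable (Function.uncurry fun s t => F s t (υ s t)) :=
    (hF.comp (continuous_fst.prodMk (continuous_snd.prodMk hυ))).measurable
  have hμM : ∀ s ∈ Icc 0 a, ∀ t ∈ Icc 0 b, |F s t (υ s t)| ≤ M :=
    fun s hs t ht => hFbound s hs t ht _ (abs_le.1 (hυk s hs t ht))
  rw [mixedKatInt_eq_katInt, mixedKatInt_eq_katInt, ← mul_sub, abs_mul]
  exact (mul_le_mul_of_nonneg_left (abs_katInt_katInt_sub_le hρ hφ hμ hμM hp hq)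
    (abs_nonneg c)).trans_lt (hmod p hp q hq hpq)

theorem uniform_equicontinuity_of_family (ρ φ a b M k : ℝ)
    (hρ : 0 < ρ) (hφ : φ ∈ Set.Ioo (0:ℝ) 1)
    (ha : 0 < a) (hb : 0 < b) (hM : 0 < M) (hk : 0 < k)
    (F : ℝ → ℝ → ℝ → ℝ)
    (hF : Continuous (fun p : ℝ × ℝ × ℝ => F p.1 p.2.1 p.2.2))
    (hFbound : ∀ x ∈ Set.Icc (0:ℝ) a, ∀ y ∈ Set.Icc (0:ℝ) b, ∀ u ∈ Set.Icc (-k) k,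
      |F x y u| ≤ M) :
    UniformContinuousOn (fun p : ℝ × ℝ => p.1 ^ (ρ * φ) * p.2 ^ (ρ * φ))
      (Set.Icc 0 a ×ˢ Set.Icc 0 b) ∧
    ∀ ε > (0:ℝ), ∃ δ > (0:ℝ), ∀ υ : ℝ → ℝ → ℝ,
      Continuous (fun p : ℝ × ℝ => υ p.1 p.2) →
      (∀ x ∈ Set.Icc (0:ℝ) a, ∀ y ∈ Set.Icc (0:ℝ) b, |υ x y| ≤ k) →
      ∀ p ∈ Set.Icc (0:ℝ) a ×ˢ Set.Icc (0:ℝ) b,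
        ∀ q ∈ Set.Icc (0:ℝ) a ×ˢ Set.Icc (0:ℝ) b,
          dist p q < δ →
            |mixedKatInt ρ ρ φ φ (fun s t => F s t (υ s t)) p.1 p.2 -
              mixedKatInt ρ ρ φ φ (fun s t => F s t (υ s t)) q.1 q.2| < ε :=
  uniform_equicontinuity_of_family_general ρ φ a b M k hρ hφ F hF hFbound
end

section
/- Let ρ₁,ρ₂>0, φ=(φ₁,φ₂), ψ=(ψ₁,ψ₂) with entries in (0,1), and R₁,R₂>0. Set Ξ₁ = R₁/(Γ(φ₁+1)Γ(φ₂+1))·(a^{ρ₁}/ρ₁)^{φ₁}(b^{ρ₂}/ρ₂)^{φ₂} and Ξ₂ = R₂/(Γ(ψ₁+1)Γ(ψ₂+1))·(a^{ρ₁}/ρ₁)^{ψ₁}(b^{ρ₂}/ρ₂)^{ψ₂}, and assume max(Ξ₁,Ξ₂) < 1/2. Suppose F,G : [0,a]×[0,b]×ℝ×ℝ → ℝ are continuous with |F(x,y,u,w)−F(x,y,u',w')| ≤ R₁(|u−u'|+|w−w'|) and |G(x,y,u,w)−G(x,y,u',w')| ≤ R₂(|u−u'|+|w−w'|), and h,g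 : [0,a]×[0,b] → ℝ are continuous. Then there is a unique pair of continuous functions (υ,ω) satisfying υ = h + I_{0+}^{φ,ρ}[F(·,·,υ,ω)] and ω = g + I_{0+}^{ψ,ρ}[G(·,·,υ,ω)] on [0,a]×[0,b]. -/
open Real MeasureTheory Set intervalIntegral
open scoped NNReal

noncomputable def katK (ρ φ x s : ℝ) : ℝ := s ^ (ρ - 1) * (x ^ ρ - s ^ ρ) ^ (φ - 1)

noncomputable def katA (ρ φ x s : ℝ) : ℝ := -((x ^ ρ - s ^ ρ) ^ φ) / (ρ * φ)

lemma katK_nonneg {ρ φ x s : ℝ} (hρ : 0 < ρ) (hs : 0 ≤ s) (hsx : s ≤ x) :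
    0 ≤ katK ρ φ x s :=
  mul_nonneg (Real.rpow_nonneg hs _)
    (Real.rpow_nonneg (sub_nonneg.2 (Real.rpow_le_rpow hs hsx hρ.le)) _)

lemma katA_cont {ρ φ : ℝ} (hρ : 0 < ρ) (hφ : 0 < φ) (x : ℝ) :
    Continuous (katA ρ φ x) :=
  (((Real.continuous_rpow_const hφ.le).comp
    (continuous_const.sub (Real.continuous_rpow_const hρ.le))).neg).div_const _

lemma katA_hasDerivAt {ρ φ x s : ℝ} (hρ : 0 < ρ) (hφ : 0 < φ) (hs : 0 < s) (hsx : s < x) :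
    HasDerivAt (katA ρ φ x) (katK ρ φ x s) s := by
  have hz : 0 < x ^ ρ - s ^ ρ := sub_pos.2 (Real.rpow_lt_rpow hs.le hsx hρ)
  have h1 : HasDerivAt (fun s : ℝ => s ^ ρ) (ρ * s ^ (ρ - 1)) s :=
    Real.hasDerivAt_rpow_const (Or.inl hs.ne')
  have h2 : HasDerivAt (fun s : ℝ => x ^ ρ - s ^ ρ) (-(ρ * s ^ (ρ - 1))) s :=
    h1.const_sub _
  have h3 : HasDerivAt (fun z : ℝ => z ^ φ) (φ * (x ^ ρ - s ^ ρ) ^ (φ - 1)) (x ^ ρ - s ^ ρ) :=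
    Real.hasDerivAt_rpow_const (Or.inl hz.ne')
  have h4 : HasDerivAt (katA ρ φ x) (-(φ * (x ^ ρ - s ^ ρ) ^ (φ - 1) * -(ρ * s ^ (ρ - 1))) / (ρ * φ)) s :=
    (h3.comp s h2).neg.div_const (ρ * φ)
  convert h4 using 1
  unfold katK
  field_simp

lemma katK_integrableOn {ρ φ x : ℝ} (hρ : 0 < ρ) (hφ : 0 < φ) :
    IntegrableOn (katK ρ φ x) (Ioc 0 x) volume :=
  intervalIntegral.integrableOn_deriv_of_nonneg ((katA_cont hρ hφ x).continuousOn)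
    (fun s hs => katA_hasDerivAt hρ hφ hs.1 hs.2)
    (fun s hs => katK_nonneg hρ hs.1.le hs.2.le)

lemma katK_intervalIntegrable {ρ φ x : ℝ} (hρ : 0 < ρ) (hφ : 0 < φ) (hx : 0 ≤ x) :
    IntervalIntegrable (katK ρ φ x) volume 0 x := by
  rw [intervalIntegrable_iff_integrableOn_Ioc_of_le hx]
  exact katK_integrableOn hρ hφ

lemma katK_integral {ρ φ x : ℝ} (hρ : 0 < ρ) (hφ : 0 < φ) (hx : 0 ≤ x) :
    ∫ s in (0:ℝ)..x, katK ρ φ x s = (x ^ ρ) ^ φ / (ρ * φ) := by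
  rw [intervalIntegral.integral_eq_sub_of_hasDeriv_right_of_le hx
    ((katA_cont hρ hφ x).continuousOn)
    (fun s hs => (katA_hasDerivAt hρ hφ hs.1 hs.2).hasDerivWithinAt)
    (katK_intervalIntegrable hρ hφ hx)]
  unfold katA
  rw [sub_self, Real.zero_rpow hφ.ne', Real.zero_rpow hρ.ne', sub_zero]
  ring
lemma katK_measurable (ρ φ x : ℝ) : Measurable (katK ρ φ x) :=
  ((measurable_id.pow_const _)).mul
    ((measurable_const.sub (measurable_id.pow_const _)).pow_const _)

lemma katC_nonneg {ρ φ x : ℝ} (hρ : 0 < ρ) (hφ : 0 < φ) (hx : 0 ≤ x) :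
    0 ≤ (x ^ ρ) ^ φ / (ρ * φ) :=
  div_nonneg (Real.rpow_nonneg (Real.rpow_nonneg hx _) _) (by positivity)

lemma katK_mul_intervalIntegrable {ρ φ x : ℝ} {f : ℝ → ℝ} (hρ : 0 < ρ) (hφ : 0 < φ)
    (hx : 0 ≤ x) (hf : ContinuousOn f (Icc 0 x)) :
    IntervalIntegrable (fun s => katK ρ φ x s * f s) volume 0 x :=
  (katK_intervalIntegrable hρ hφ hx).mul_continuousOn (by rwa [uIcc_of_le hx])

lemma katK_mul_integral_bound {ρ φ x M : ℝ} {f : ℝ → ℝ} (hρ : 0 < ρ) (hφ : 0 < φ)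
    (hx : 0 ≤ x) (hM : 0 ≤ M) (hf : ∀ s ∈ Ioc 0 x, |f s| ≤ M) :
    |∫ s in (0:ℝ)..x, katK ρ φ x s * f s| ≤ M * ((x ^ ρ) ^ φ / (ρ * φ)) := by
  have hb : IntervalIntegrable (fun s => M * katK ρ φ x s) volume 0 x :=
    (katK_intervalIntegrable hρ hφ hx).const_mul M
  have h := intervalIntegral.norm_integral_le_abs_of_norm_le (μ := volume)
    (f := fun s => katK ρ φ x s * f s) (g := fun s => M * katK ρ φ x s) ?_ hb
  · rw [Real.norm_eq_abs] at h
    refine h.trans ?_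
    rw [intervalIntegral.integral_const_mul, katK_integral hρ hφ hx, abs_of_nonneg
      (mul_nonneg hM (katC_nonneg hρ hφ hx))]
  · rw [uIoc_of_le hx]
    filter_upwards [ae_restrict_mem measurableSet_Ioc] with s hs
    rw [Real.norm_eq_abs, abs_mul, abs_of_nonneg (katK_nonneg hρ hs.1.le hs.2)]
    exact mul_le_mul_of_nonneg_left (hf s hs) (katK_nonneg hρ hs.1.le hs.2) |>.trans
      (le_of_eq (mul_comm _ _))

/-- the double Katugampola-type integral -/
noncomputable def katD (ρ₁ ρ₂ φ₁ φ₂ : ℝ) (μ : ℝ → ℝ → ℝ) (x y : ℝ) : ℝ :=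
  ∫ s in (0:ℝ)..x, katK ρ₁ φ₁ x s * ∫ t in (0:ℝ)..y, katK ρ₂ φ₂ y t * μ s t

section
variable {ρ₁ ρ₂ φ₁ φ₂ : ℝ} {μ : ℝ → ℝ → ℝ} {x y M : ℝ}
variable (hρ₁ : 0 < ρ₁) (hρ₂ : 0 < ρ₂) (hφ₁ : 0 < φ₁) (hφ₂ : 0 < φ₂)

/-- continuity in the parameter of the inner integral -/
lemma inner_cont (hρ₂ : 0 < ρ₂) (hφ₂ : 0 < φ₂) (hy : 0 ≤ y)
    (hμc : Continuous (fun p : ℝ × ℝ => μ p.1 p.2)) (hM : ∀ s t, |μ s t| ≤ M) :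
    Continuous (fun s => ∫ t in (0:ℝ)..y, katK ρ₂ φ₂ y t * μ s t) := by
  have key : Continuous (fun s => ∫ t, katK ρ₂ φ₂ y t * μ s t
      ∂(volume.restrict (Ioc 0 y))) := by
    apply MeasureTheory.continuous_of_dominated (bound := fun t => M * katK ρ₂ φ₂ y t)
    · intro s
      exact ((katK_measurable ρ₂ φ₂ y).mul
        ((hμc.comp (continuous_const.prodMk continuous_id)).measurable)).aestronglyMeasurable
    · intro s
      filter_upwards [ae_restrict_mem measurableSet_Ioc] with t ht
      rw [Real.norm_eq_abs, abs_mul, abs_of_nonneg (katK_nonneg hρ₂ ht.1.le ht.2)]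
      calc katK ρ₂ φ₂ y t * |μ s t| ≤ katK ρ₂ φ₂ y t * M :=
            mul_le_mul_of_nonneg_left (hM s t) (katK_nonneg hρ₂ ht.1.le ht.2)
        _ = M * katK ρ₂ φ₂ y t := mul_comm _ _
    · exact (katK_integrableOn hρ₂ hφ₂).const_mul M
    · filter_upwards with t
      exact continuous_const.mul (hμc.comp (continuous_id.prodMk continuous_const))
  refine key.congr fun s => ?_
  rw [intervalIntegral.integral_of_le hy]

include hρ₁ hρ₂ hφ₁ hφ₂ in
lemma katD_bound (hx : 0 ≤ x) (hy : 0 ≤ y) (hMnn : 0 ≤ M)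
    (hμc : Continuous (fun p : ℝ × ℝ => μ p.1 p.2)) (hM : ∀ s t, |μ s t| ≤ M) :
    |katD ρ₁ ρ₂ φ₁ φ₂ μ x y| ≤
      M * ((x ^ ρ₁) ^ φ₁ / (ρ₁ * φ₁)) * ((y ^ ρ₂) ^ φ₂ / (ρ₂ * φ₂)) := by
  have h := katK_mul_integral_bound (M := M * ((y ^ ρ₂) ^ φ₂ / (ρ₂ * φ₂)))
    (f := fun s => ∫ t in (0:ℝ)..y, katK ρ₂ φ₂ y t * μ s t) hρ₁ hφ₁ hx
    (mul_nonneg hMnn (katC_nonneg hρ₂ hφ₂ hy)) ?_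
  · calc |katD ρ₁ ρ₂ φ₁ φ₂ μ x y| ≤ M * ((y ^ ρ₂) ^ φ₂ / (ρ₂ * φ₂)) *
        ((x ^ ρ₁) ^ φ₁ / (ρ₁ * φ₁)) := h
      _ = _ := by ring
  · intro s _
    exact katK_mul_integral_bound hρ₂ hφ₂ hy hMnn (fun t _ => hM s t)

include hρ₁ hρ₂ hφ₁ hφ₂ in
lemma katD_sub {μ' M' : _} (hx : 0 ≤ x) (hy : 0 ≤ y)
    (hμc : Continuous (fun p : ℝ × ℝ => μ p.1 p.2)) (hM : ∀ s t, |μ s t| ≤ M)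
    (hμc' : Continuous (fun p : ℝ × ℝ => μ' p.1 p.2)) (hM' : ∀ s t, |μ' s t| ≤ M') :
    katD ρ₁ ρ₂ φ₁ φ₂ μ x y - katD ρ₁ ρ₂ φ₁ φ₂ μ' x y =
      katD ρ₁ ρ₂ φ₁ φ₂ (fun s t => μ s t - μ' s t) x y := by
  have hii : ∀ (ν : ℝ → ℝ → ℝ), Continuous (fun p : ℝ × ℝ => ν p.1 p.2) → ∀ s : ℝ,
      IntervalIntegrable (fun t => katK ρ₂ φ₂ y t * ν s t) volume 0 y := fun ν hν s =>
    katK_mul_intervalIntegrable hρ₂ hφ₂ hy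
      ((hν.comp (continuous_const.prodMk continuous_id)).continuousOn)
  have hoi : ∀ (ν : ℝ → ℝ → ℝ), Continuous (fun p : ℝ × ℝ => ν p.1 p.2) →
      (∀ s t, |ν s t| ≤ M + M') →
      IntervalIntegrable (fun s => katK ρ₁ φ₁ x s *
        ∫ t in (0:ℝ)..y, katK ρ₂ φ₂ y t * ν s t) volume 0 x := fun ν hν hb =>
    katK_mul_intervalIntegrable hρ₁ hφ₁ hx
      ((inner_cont hρ₂ hφ₂ hy hν hb).continuousOn)
  have hMb : ∀ s t, |μ s t| ≤ M + M' := fun s t => (hM s t).trans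
    (le_add_of_nonneg_right ((abs_nonneg _).trans (hM' 0 0)))
  have hMb' : ∀ s t, |μ' s t| ≤ M + M' := fun s t => (hM' s t).trans
    (le_add_of_nonneg_left ((abs_nonneg _).trans (hM 0 0)))
  unfold katD
  rw [← intervalIntegral.integral_sub (hoi μ hμc hMb) (hoi μ' hμc' hMb')]
  apply intervalIntegral.integral_congr
  intro s _
  simp only
  rw [← mul_sub, ← intervalIntegral.integral_sub (hii μ hμc s) (hii μ' hμc' s)]
  congr 1
  apply intervalIntegral.integral_congr
  intro t _
  simp only
  ring
end

noncomputable def katH (ρ₁ ρ₂ φ₁ φ₂ : ℝ) (μ : ℝ → ℝ → ℝ) (x y : ℝ) : ℝ :=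
  ∫ σ in (0:ℝ)..1, katK ρ₁ φ₁ 1 σ *
    ∫ τ in (0:ℝ)..1, katK ρ₂ φ₂ 1 τ * μ (x * σ) (y * τ)

lemma katK_scale {ρ φ x σ : ℝ} (hρ : 0 < ρ) (hx : 0 < x) (hσ : 0 ≤ σ) (hσ1 : σ ≤ 1) :
    x * katK ρ φ x (x * σ) = x ^ (ρ * φ) * katK ρ φ 1 σ := by
  unfold katK
  rw [Real.one_rpow, Real.mul_rpow hx.le hσ, Real.mul_rpow hx.le hσ,
    show x ^ ρ - x ^ ρ * σ ^ ρ = x ^ ρ * (1 - σ ^ ρ) by ring,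
    Real.mul_rpow (Real.rpow_nonneg hx.le ρ)
      (sub_nonneg.2 (Real.rpow_le_one hσ hσ1 hρ.le)),
    ← Real.rpow_mul hx.le ρ (φ - 1)]
  have hxx : x ^ (ρ * φ) = x ^ (1:ℝ) * x ^ (ρ - 1) * x ^ (ρ * (φ - 1)) := by
    rw [← Real.rpow_add hx, ← Real.rpow_add hx]; ring_nf
  rw [Real.rpow_one] at hxx
  rw [hxx]; ring

lemma katK_scale_integral {ρ φ x : ℝ} (f : ℝ → ℝ) (hρ : 0 < ρ) (hφ : 0 < φ) (hx : 0 < x) :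
    ∫ s in (0:ℝ)..x, katK ρ φ x s * f s =
      x ^ (ρ * φ) * ∫ σ in (0:ℝ)..1, katK ρ φ 1 σ * f (x * σ) := by
  have h0 := intervalIntegral.smul_integral_comp_mul_left (a := (0:ℝ)) (b := 1)
    (fun s => katK ρ φ x s * f s) x
  rw [mul_zero, mul_one] at h0
  rw [← h0, smul_eq_mul, ← intervalIntegral.integral_const_mul,
    ← intervalIntegral.integral_const_mul]
  apply intervalIntegral.integral_congr
  intro σ hσ
  rw [uIcc_of_le zero_le_one] at hσ
  simp only
  rw [← mul_assoc, katK_scale hρ hx hσ.1 hσ.2, mul_assoc]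

lemma katD_eq {ρ₁ ρ₂ φ₁ φ₂ x y : ℝ} (μ : ℝ → ℝ → ℝ)
    (hρ₁ : 0 < ρ₁) (hρ₂ : 0 < ρ₂) (hφ₁ : 0 < φ₁) (hφ₂ : 0 < φ₂)
    (hx : 0 ≤ x) (hy : 0 ≤ y) :
    katD ρ₁ ρ₂ φ₁ φ₂ μ x y =
      x ^ (ρ₁ * φ₁) * (y ^ (ρ₂ * φ₂) * katH ρ₁ ρ₂ φ₁ φ₂ μ x y) := by
  rcases eq_or_lt_of_le hx with rfl | hx
  · rw [Real.zero_rpow (by positivity)]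
    simp [katD]
  rcases eq_or_lt_of_le hy with rfl | hy
  · rw [show (0:ℝ) ^ (ρ₂ * φ₂) = 0 from Real.zero_rpow (by positivity)]
    simp [katD]
  unfold katD
  rw [katK_scale_integral (fun s => ∫ t in (0:ℝ)..y, katK ρ₂ φ₂ y t * μ s t) hρ₁ hφ₁ hx]
  congr 1
  unfold katH
  rw [← intervalIntegral.integral_const_mul]
  apply intervalIntegral.integral_congr
  intro σ _
  simp only
  rw [katK_scale_integral (fun t => μ (x * σ) t) hρ₂ hφ₂ hy]
  ring

lemma katH_cont {ρ₁ ρ₂ φ₁ φ₂ M : ℝ} (μ : ℝ → ℝ → ℝ)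
    (hρ₁ : 0 < ρ₁) (hρ₂ : 0 < ρ₂) (hφ₁ : 0 < φ₁) (hφ₂ : 0 < φ₂)
    (hμc : Continuous (fun p : ℝ × ℝ => μ p.1 p.2)) (hM : ∀ s t, |μ s t| ≤ M) :
    Continuous (fun p : ℝ × ℝ => katH ρ₁ ρ₂ φ₁ φ₂ μ p.1 p.2) := by
  set ν : Measure (ℝ × ℝ) :=
    (volume.restrict (Ioc (0:ℝ) 1)).prod (volume.restrict (Ioc (0:ℝ) 1)) with hν
  set Gf : ℝ × ℝ → ℝ × ℝ → ℝ := fun p z =>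
    katK ρ₁ φ₁ 1 z.1 * (katK ρ₂ φ₂ 1 z.2 * μ (p.1 * z.1) (p.2 * z.2)) with hGf
  have hW_int : Integrable (fun z : ℝ × ℝ => katK ρ₁ φ₁ 1 z.1 * katK ρ₂ φ₂ 1 z.2) ν :=
    (katK_integrableOn hρ₁ hφ₁).mul_prod (katK_integrableOn hρ₂ hφ₂)
  have hae : ∀ᵐ z ∂ν, z ∈ Ioc (0:ℝ) 1 ×ˢ Ioc (0:ℝ) 1 := by
    rw [hν, Measure.prod_restrict]
    exact ae_restrict_mem (measurableSet_Ioc.prod measurableSet_Ioc)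
  have hmeas : ∀ p : ℝ × ℝ, AEStronglyMeasurable (Gf p) ν := by
    intro p
    exact (((katK_measurable ρ₁ φ₁ 1).comp measurable_fst).mul
      (((katK_measurable ρ₂ φ₂ 1).comp measurable_snd).mul
        ((hμc.comp ((continuous_const.mul continuous_fst).prodMk
          (continuous_const.mul continuous_snd))).measurable))).aestronglyMeasurable
  have hbound : ∀ p : ℝ × ℝ, ∀ᵐ z ∂ν, ‖Gf p z‖ ≤
      M * (katK ρ₁ φ₁ 1 z.1 * katK ρ₂ φ₂ 1 z.2) := by
    intro p
    filter_upwards [hae] with z hz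
    have h1 := katK_nonneg (φ := φ₁) (x := (1:ℝ)) hρ₁ hz.1.1.le hz.1.2
    have h2 := katK_nonneg (φ := φ₂) (x := (1:ℝ)) hρ₂ hz.2.1.le hz.2.2
    rw [hGf, Real.norm_eq_abs, abs_mul, abs_mul, abs_of_nonneg h1, abs_of_nonneg h2]
    calc katK ρ₁ φ₁ 1 z.1 * (katK ρ₂ φ₂ 1 z.2 * |μ (p.1 * z.1) (p.2 * z.2)|)
        ≤ katK ρ₁ φ₁ 1 z.1 * (katK ρ₂ φ₂ 1 z.2 * M) := by
          apply mul_le_mul_of_nonneg_left _ h1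
          exact mul_le_mul_of_nonneg_left (hM _ _) h2
      _ = M * (katK ρ₁ φ₁ 1 z.1 * katK ρ₂ φ₂ 1 z.2) := by ring
  have hInt : ∀ p : ℝ × ℝ, Integrable (Gf p) ν := fun p =>
    (hW_int.const_mul M).mono' (hmeas p) (hbound p)
  have key : Continuous fun p : ℝ × ℝ => ∫ z, Gf p z ∂ν := by
    apply MeasureTheory.continuous_of_dominated hmeas hbound (hW_int.const_mul M)
    filter_upwards with z
    exact continuous_const.mul (continuous_const.mul (hμc.comp
      ((continuous_fst.mul continuous_const).prodMk
        (continuous_snd.mul continuous_const))))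
  have heq : ∀ p : ℝ × ℝ, katH ρ₁ ρ₂ φ₁ φ₂ μ p.1 p.2 = ∫ z, Gf p z ∂ν := by
    intro p
    unfold katH
    rw [hν, intervalIntegral.integral_of_le zero_le_one,
      ← MeasureTheory.integral_integral (f := fun σ τ => Gf p (σ, τ)) (hInt p)]
    refine MeasureTheory.integral_congr_ae (Filter.Eventually.of_forall fun σ => ?_)
    simp only
    rw [intervalIntegral.integral_of_le zero_le_one, ← MeasureTheory.integral_const_mul]
  exact key.congr fun p => (heq p).symm

section
variable {ρ₁ ρ₂ φ₁ φ₂ x y a b M : ℝ} {μ : ℝ → ℝ → ℝ}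

lemma mixedKat_eq_katD (ρ₁ ρ₂ φ₁ φ₂ : ℝ) (μ : ℝ → ℝ → ℝ) (x y : ℝ) :
    mixedKatInt ρ₁ ρ₂ φ₁ φ₂ μ x y =
      (ρ₁ ^ (1 - φ₁) * ρ₂ ^ (1 - φ₂)) / (Real.Gamma φ₁ * Real.Gamma φ₂) *
        katD ρ₁ ρ₂ φ₁ φ₂ μ x y := by
  unfold mixedKatInt katD
  congr 1
  apply intervalIntegral.integral_congr
  intro s _
  simp only
  rw [← intervalIntegral.integral_const_mul]
  apply intervalIntegral.integral_congr
  intro t _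
  simp only
  unfold katK
  ring

lemma mixedKat_contOn (hρ₁ : 0 < ρ₁) (hρ₂ : 0 < ρ₂) (hφ₁ : 0 < φ₁) (hφ₂ : 0 < φ₂)
    (hμc : Continuous (fun p : ℝ × ℝ => μ p.1 p.2)) (hM : ∀ s t, |μ s t| ≤ M) :
    ContinuousOn (fun p : ℝ × ℝ => mixedKatInt ρ₁ ρ₂ φ₁ φ₂ μ p.1 p.2)
      (Ici (0:ℝ) ×ˢ Ici (0:ℝ)) := by
  have hc : Continuous (fun p : ℝ × ℝ =>
      (ρ₁ ^ (1 - φ₁) * ρ₂ ^ (1 - φ₂)) / (Real.Gamma φ₁ * Real.Gamma φ₂) *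
        (p.1 ^ (ρ₁ * φ₁) * (p.2 ^ (ρ₂ * φ₂) * katH ρ₁ ρ₂ φ₁ φ₂ μ p.1 p.2))) := by
    refine continuous_const.mul ?_
    exact ((Real.continuous_rpow_const (by positivity)).comp continuous_fst).mul
      (((Real.continuous_rpow_const (by positivity)).comp continuous_snd).mul
        (katH_cont μ hρ₁ hρ₂ hφ₁ hφ₂ hμc hM))
  refine hc.continuousOn.congr ?_
  intro p hp
  simp only
  rw [mixedKat_eq_katD, katD_eq μ hρ₁ hρ₂ hφ₁ hφ₂ hp.1 hp.2]

lemma mixedKat_congr (hx : 0 ≤ x) (hxa : x ≤ a) (hy : 0 ≤ y) (hyb : y ≤ b)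
    {μ' : ℝ → ℝ → ℝ}
    (hμ : ∀ s ∈ Icc 0 a, ∀ t ∈ Icc 0 b, μ s t = μ' s t) :
    mixedKatInt ρ₁ ρ₂ φ₁ φ₂ μ x y = mixedKatInt ρ₁ ρ₂ φ₁ φ₂ μ' x y := by
  unfold mixedKatInt
  congr 1
  apply intervalIntegral.integral_congr
  intro s hs
  rw [uIcc_of_le hx] at hs
  apply intervalIntegral.integral_congr
  intro t ht
  rw [uIcc_of_le hy] at ht
  simp only
  rw [hμ s ⟨hs.1, hs.2.trans hxa⟩ t ⟨ht.1, ht.2.trans hyb⟩]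

lemma mixedKat_diff_bound {μ' : ℝ → ℝ → ℝ} {M' d : ℝ}
    (hρ₁ : 0 < ρ₁) (hρ₂ : 0 < ρ₂) (hφ₁ : 0 < φ₁) (hφ₂ : 0 < φ₂)
    (ha : 0 < a) (hb : 0 < b) (hx : x ∈ Icc 0 a) (hy : y ∈ Icc 0 b)
    (hμc : Continuous (fun p : ℝ × ℝ => μ p.1 p.2)) (hM : ∀ s t, |μ s t| ≤ M)
    (hμc' : Continuous (fun p : ℝ × ℝ => μ' p.1 p.2)) (hM' : ∀ s t, |μ' s t| ≤ M')
    (hd : 0 ≤ d) (hdiff : ∀ s t, |μ s t - μ' s t| ≤ d) :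
    |mixedKatInt ρ₁ ρ₂ φ₁ φ₂ μ x y - mixedKatInt ρ₁ ρ₂ φ₁ φ₂ μ' x y| ≤
      (1 / (Real.Gamma (φ₁ + 1) * Real.Gamma (φ₂ + 1)) *
        (a ^ ρ₁ / ρ₁) ^ φ₁ * (b ^ ρ₂ / ρ₂) ^ φ₂) * d := by
  have hΓ₁ := Real.Gamma_pos_of_pos hφ₁
  have hΓ₂ := Real.Gamma_pos_of_pos hφ₂
  have hCpos : 0 < (ρ₁ ^ (1 - φ₁) * ρ₂ ^ (1 - φ₂)) / (Real.Gamma φ₁ * Real.Gamma φ₂) := by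
    apply div_pos (mul_pos (Real.rpow_pos_of_pos hρ₁ _) (Real.rpow_pos_of_pos hρ₂ _))
      (mul_pos hΓ₁ hΓ₂)
  rw [mixedKat_eq_katD, mixedKat_eq_katD, ← mul_sub, abs_mul, abs_of_pos hCpos,
    katD_sub hρ₁ hρ₂ hφ₁ hφ₂ hx.1 hy.1 hμc hM hμc' hM']
  have hb1 : |katD ρ₁ ρ₂ φ₁ φ₂ (fun s t => μ s t - μ' s t) x y| ≤
      d * ((x ^ ρ₁) ^ φ₁ / (ρ₁ * φ₁)) * ((y ^ ρ₂) ^ φ₂ / (ρ₂ * φ₂)) :=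
    katD_bound hρ₁ hρ₂ hφ₁ hφ₂ hx.1 hy.1 hd
      (by exact (hμc.sub hμc')) (fun s t => hdiff s t)
  calc (ρ₁ ^ (1 - φ₁) * ρ₂ ^ (1 - φ₂)) / (Real.Gamma φ₁ * Real.Gamma φ₂) *
        |katD ρ₁ ρ₂ φ₁ φ₂ (fun s t => μ s t - μ' s t) x y|
      ≤ (ρ₁ ^ (1 - φ₁) * ρ₂ ^ (1 - φ₂)) / (Real.Gamma φ₁ * Real.Gamma φ₂) *
        (d * ((x ^ ρ₁) ^ φ₁ / (ρ₁ * φ₁)) * ((y ^ ρ₂) ^ φ₂ / (ρ₂ * φ₂))) := by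
        exact mul_le_mul_of_nonneg_left hb1 hCpos.le
    _ ≤ (ρ₁ ^ (1 - φ₁) * ρ₂ ^ (1 - φ₂)) / (Real.Gamma φ₁ * Real.Gamma φ₂) *
        (d * ((a ^ ρ₁) ^ φ₁ / (ρ₁ * φ₁)) * ((b ^ ρ₂) ^ φ₂ / (ρ₂ * φ₂))) := by
        gcongr <;> first
          | exact hx.1 | exact hx.2 | exact hy.1 | exact hy.2
          | exact Real.rpow_nonneg (Real.rpow_nonneg hx.1 _) _
          | exact Real.rpow_nonneg (Real.rpow_nonneg hy.1 _) _
          | exact Real.rpow_nonneg hx.1 _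
          | exact Real.rpow_nonneg hy.1 _
          | exact div_nonneg (Real.rpow_nonneg (Real.rpow_nonneg hy.1 _) _) (by positivity)
          | exact div_nonneg (Real.rpow_nonneg (Real.rpow_nonneg hx.1 _) _) (by positivity)
    _ = (1 / (Real.Gamma (φ₁ + 1) * Real.Gamma (φ₂ + 1)) *
        (a ^ ρ₁ / ρ₁) ^ φ₁ * (b ^ ρ₂ / ρ₂) ^ φ₂) * d := by
        rw [Real.Gamma_add_one hφ₁.ne', Real.Gamma_add_one hφ₂.ne',
          Real.div_rpow (Real.rpow_nonneg ha.le _) hρ₁.le,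
          Real.div_rpow (Real.rpow_nonneg hb.le _) hρ₂.le,
          Real.rpow_sub hρ₁, Real.rpow_sub hρ₂, Real.rpow_one, Real.rpow_one]
        have h1 : ρ₁ ^ φ₁ ≠ 0 := (Real.rpow_pos_of_pos hρ₁ _).ne'
        have h2 : ρ₂ ^ φ₂ ≠ 0 := (Real.rpow_pos_of_pos hρ₂ _).ne'
        field_simp
end

theorem coupled_system_unique_solution (ρ₁ ρ₂ φ₁ φ₂ ψ₁ ψ₂ a b R₁ R₂ : ℝ)
    (hρ₁ : 0 < ρ₁) (hρ₂ : 0 < ρ₂)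
    (hφ₁ : φ₁ ∈ Set.Ioo (0:ℝ) 1) (hφ₂ : φ₂ ∈ Set.Ioo (0:ℝ) 1)
    (hψ₁ : ψ₁ ∈ Set.Ioo (0:ℝ) 1) (hψ₂ : ψ₂ ∈ Set.Ioo (0:ℝ) 1)
    (hR₁ : 0 < R₁) (hR₂ : 0 < R₂) (ha : 0 < a) (hb : 0 < b)
    (hΞ : max
        (R₁ / (Real.Gamma (φ₁ + 1) * Real.Gamma (φ₂ + 1)) *
          (a ^ ρ₁ / ρ₁) ^ φ₁ * (b ^ ρ₂ / ρ₂) ^ φ₂)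
        (R₂ / (Real.Gamma (ψ₁ + 1) * Real.Gamma (ψ₂ + 1)) *
          (a ^ ρ₁ / ρ₁) ^ ψ₁ * (b ^ ρ₂ / ρ₂) ^ ψ₂) < 1 / 2)
    (F G : ℝ → ℝ → ℝ → ℝ → ℝ)
    (hF : Continuous (fun p : ℝ × ℝ × ℝ × ℝ => F p.1 p.2.1 p.2.2.1 p.2.2.2))
    (hG : Continuous (fun p : ℝ × ℝ × ℝ × ℝ => G p.1 p.2.1 p.2.2.1 p.2.2.2))
    (hFLip : ∀ x y u w u' w' : ℝ,
      |F x y u w - F x y u' w'| ≤ R₁ * (|u - u'| + |w - w'|))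
    (hGLip : ∀ x y u w u' w' : ℝ,
      |G x y u w - G x y u' w'| ≤ R₂ * (|u - u'| + |w - w'|))
    (h g : ℝ → ℝ → ℝ)
    (hh : ContinuousOn (fun p : ℝ × ℝ => h p.1 p.2) (Set.Icc 0 a ×ˢ Set.Icc 0 b))
    (hg : ContinuousOn (fun p : ℝ × ℝ => g p.1 p.2) (Set.Icc 0 a ×ˢ Set.Icc 0 b)) :
    ∃ υ ω : ℝ → ℝ → ℝ,
      (ContinuousOn (fun p : ℝ × ℝ => υ p.1 p.2) (Set.Icc 0 a ×ˢ Set.Icc 0 b) ∧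
       ContinuousOn (fun p : ℝ × ℝ => ω p.1 p.2) (Set.Icc 0 a ×ˢ Set.Icc 0 b) ∧
       ∀ x ∈ Set.Icc (0:ℝ) a, ∀ y ∈ Set.Icc (0:ℝ) b,
         υ x y = h x y +
           mixedKatInt ρ₁ ρ₂ φ₁ φ₂ (fun s t => F s t (υ s t) (ω s t)) x y ∧
         ω x y = g x y +
           mixedKatInt ρ₁ ρ₂ ψ₁ ψ₂ (fun s t => G s t (υ s t) (ω s t)) x y) ∧
      ∀ υ' ω' : ℝ → ℝ → ℝ,
        (ContinuousOn (fun p : ℝ × ℝ => υ' p.1 p.2) (Set.Icc 0 a ×ˢ Set.Icc 0 b) ∧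
         ContinuousOn (fun p : ℝ × ℝ => ω' p.1 p.2) (Set.Icc 0 a ×ˢ Set.Icc 0 b) ∧
         ∀ x ∈ Set.Icc (0:ℝ) a, ∀ y ∈ Set.Icc (0:ℝ) b,
           υ' x y = h x y +
             mixedKatInt ρ₁ ρ₂ φ₁ φ₂ (fun s t => F s t (υ' s t) (ω' s t)) x y ∧
           ω' x y = g x y +
             mixedKatInt ρ₁ ρ₂ ψ₁ ψ₂ (fun s t => G s t (υ' s t) (ω' s t)) x y) →
        ∀ x ∈ Set.Icc (0:ℝ) a, ∀ y ∈ Set.Icc (0:ℝ) b,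
          υ' x y = υ x y ∧ ω' x y = ω x y := by

  have hφ₁p := hφ₁.1; have hφ₂p := hφ₂.1; have hψ₁p := hψ₁.1; have hψ₂p := hψ₂.1
  set Ω : Set (ℝ × ℝ) := Set.Icc (0:ℝ) a ×ˢ Set.Icc (0:ℝ) b with hΩdef
  haveI : CompactSpace ↥Ω := isCompact_iff_compactSpace.mp (isCompact_Icc.prod isCompact_Icc)
  set pa : ℝ → ℝ := fun x => max 0 (min x a) with hpadef
  set pb : ℝ → ℝ := fun y => max 0 (min y b) with hpbdef
  have hpa_mem : ∀ x, pa x ∈ Set.Icc 0 a :=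
    fun x => ⟨le_max_left _ _, max_le ha.le (min_le_right _ _)⟩
  have hpb_mem : ∀ y, pb y ∈ Set.Icc 0 b :=
    fun y => ⟨le_max_left _ _, max_le hb.le (min_le_right _ _)⟩
  have hpa_id : ∀ x ∈ Set.Icc 0 a, pa x = x := by
    intro x hx; rw [hpadef]; simp only; rw [min_eq_left hx.2, max_eq_right hx.1]
  have hpb_id : ∀ y ∈ Set.Icc 0 b, pb y = y := by
    intro y hy; rw [hpbdef]; simp only; rw [min_eq_left hy.2, max_eq_right hy.1]
  have hpac : Continuous pa := continuous_const.max (continuous_id.min continuous_const)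
  have hpbc : Continuous pb := continuous_const.max (continuous_id.min continuous_const)
  have hmemΩ : ∀ p : ℝ × ℝ, (pa p.1, pb p.2) ∈ Ω := fun p => ⟨hpa_mem _, hpb_mem _⟩
  set proj : ℝ × ℝ → ↥Ω := fun p => ⟨(pa p.1, pb p.2), hmemΩ p⟩ with hprojdef
  have hprojc : Continuous proj :=
    Continuous.subtype_mk ((hpac.comp continuous_fst).prodMk (hpbc.comp continuous_snd)) _
  have hproj_id : ∀ p : ℝ × ℝ, p ∈ Ω → (proj p : ℝ × ℝ) = p := by
    intro p hp
    rw [hprojdef]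
    exact Prod.ext (hpa_id _ hp.1) (hpb_id _ hp.2)
  -- the space
  set X := C(↥Ω, ℝ) × C(↥Ω, ℝ) with hXdef
  -- integrands
  set μF : X → ℝ → ℝ → ℝ :=
    fun e s t => F (pa s) (pb t) (e.1 (proj (s, t))) (e.2 (proj (s, t))) with hμFdef
  set μG : X → ℝ → ℝ → ℝ :=
    fun e s t => G (pa s) (pb t) (e.1 (proj (s, t))) (e.2 (proj (s, t))) with hμGdef
  have hμFc : ∀ e : X, Continuous (fun p : ℝ × ℝ => μF e p.1 p.2) := by
    intro e
    exact hF.comp ((hpac.comp continuous_fst).prodMk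
      ((hpbc.comp continuous_snd).prodMk
        (((e.1.continuous.comp hprojc)).prodMk ((e.2.continuous.comp hprojc)))))
  have hμGc : ∀ e : X, Continuous (fun p : ℝ × ℝ => μG e p.1 p.2) := by
    intro e
    exact hG.comp ((hpac.comp continuous_fst).prodMk
      ((hpbc.comp continuous_snd).prodMk
        (((e.1.continuous.comp hprojc)).prodMk ((e.2.continuous.comp hprojc)))))
  have hbdd : ∀ (F' : ℝ → ℝ → ℝ → ℝ → ℝ),
      Continuous (fun p : ℝ × ℝ × ℝ × ℝ => F' p.1 p.2.1 p.2.2.1 p.2.2.2) →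
      ∀ e : X, ∃ M, ∀ s t : ℝ,
        |F' (pa s) (pb t) (e.1 (proj (s, t))) (e.2 (proj (s, t)))| ≤ M := by
    intro F' hF' e
    have hS : IsCompact (Set.Icc (0:ℝ) a ×ˢ Set.Icc (0:ℝ) b ×ˢ
        Set.Icc (-‖e.1‖) ‖e.1‖ ×ˢ Set.Icc (-‖e.2‖) ‖e.2‖) :=
      isCompact_Icc.prod (isCompact_Icc.prod (isCompact_Icc.prod isCompact_Icc))
    obtain ⟨C, hC⟩ := hS.exists_bound_of_continuousOn hF'.continuousOn
    refine ⟨C, fun s t => ?_⟩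
    have h1 : e.1 (proj (s, t)) ∈ Set.Icc (-‖e.1‖) ‖e.1‖ := by
      have := e.1.norm_coe_le_norm (proj (s, t))
      rw [Real.norm_eq_abs] at this
      exact abs_le.mp this
    have h2 : e.2 (proj (s, t)) ∈ Set.Icc (-‖e.2‖) ‖e.2‖ := by
      have := e.2.norm_coe_le_norm (proj (s, t))
      rw [Real.norm_eq_abs] at this
      exact abs_le.mp this
    have := hC (pa s, pb t, e.1 (proj (s, t)), e.2 (proj (s, t)))
      ⟨hpa_mem s, hpb_mem t, h1, h2⟩
    rwa [Real.norm_eq_abs] at this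
  have hμFbdd : ∀ e : X, ∃ M, ∀ s t, |μF e s t| ≤ M := hbdd F hF
  have hμGbdd : ∀ e : X, ∃ M, ∀ s t, |μG e s t| ≤ M := hbdd G hG
  have hΩsub : Ω ⊆ Set.Ici (0:ℝ) ×ˢ Set.Ici (0:ℝ) := by
    rw [hΩdef]; intro p hp; exact ⟨hp.1.1, hp.2.1⟩
  have hcontF : ∀ e : X, Continuous (Ω.restrict
      (fun p : ℝ × ℝ => h p.1 p.2 + mixedKatInt ρ₁ ρ₂ φ₁ φ₂ (μF e) p.1 p.2)) := by
    intro e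
    obtain ⟨M, hM⟩ := hμFbdd e
    exact ContinuousOn.restrict (hh.add
      ((mixedKat_contOn hρ₁ hρ₂ hφ₁p hφ₂p (hμFc e) hM).mono hΩsub))
  have hcontG : ∀ e : X, Continuous (Ω.restrict
      (fun p : ℝ × ℝ => g p.1 p.2 + mixedKatInt ρ₁ ρ₂ ψ₁ ψ₂ (μG e) p.1 p.2)) := by
    intro e
    obtain ⟨M, hM⟩ := hμGbdd e
    exact ContinuousOn.restrict (hg.add
      ((mixedKat_contOn hρ₁ hρ₂ hψ₁p hψ₂p (hμGc e) hM).mono hΩsub))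
  set Φ : X → X := fun e => (⟨_, hcontF e⟩, ⟨_, hcontG e⟩) with hΦdef
  set Ξ₁ := R₁ / (Real.Gamma (φ₁ + 1) * Real.Gamma (φ₂ + 1)) *
    (a ^ ρ₁ / ρ₁) ^ φ₁ * (b ^ ρ₂ / ρ₂) ^ φ₂ with hΞ₁def
  set Ξ₂ := R₂ / (Real.Gamma (ψ₁ + 1) * Real.Gamma (ψ₂ + 1)) *
    (a ^ ρ₁ / ρ₁) ^ ψ₁ * (b ^ ρ₂ / ρ₂) ^ ψ₂ with hΞ₂def
  have hΓφ₁ : 0 < Real.Gamma (φ₁ + 1) := Real.Gamma_pos_of_pos (by linarith)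
  have hΓφ₂ : 0 < Real.Gamma (φ₂ + 1) := Real.Gamma_pos_of_pos (by linarith)
  have hΓψ₁ : 0 < Real.Gamma (ψ₁ + 1) := Real.Gamma_pos_of_pos (by linarith)
  have hΓψ₂ : 0 < Real.Gamma (ψ₂ + 1) := Real.Gamma_pos_of_pos (by linarith)
  have hΞ₁pos : 0 < Ξ₁ := by
    rw [hΞ₁def]
    exact mul_pos (mul_pos (div_pos hR₁ (mul_pos hΓφ₁ hΓφ₂))
      (Real.rpow_pos_of_pos (div_pos (Real.rpow_pos_of_pos ha _) hρ₁) _))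
      (Real.rpow_pos_of_pos (div_pos (Real.rpow_pos_of_pos hb _) hρ₂) _)
  have hΞ₂pos : 0 < Ξ₂ := by
    rw [hΞ₂def]
    exact mul_pos (mul_pos (div_pos hR₂ (mul_pos hΓψ₁ hΓψ₂))
      (Real.rpow_pos_of_pos (div_pos (Real.rpow_pos_of_pos ha _) hρ₁) _))
      (Real.rpow_pos_of_pos (div_pos (Real.rpow_pos_of_pos hb _) hρ₂) _)
  -- pointwise Lipschitz estimates for the integrands
  have hdistF : ∀ e e' : X, ∀ s t : ℝ,
      |μF e s t - μF e' s t| ≤ R₁ * (dist e.1 e'.1 + dist e.2 e'.2) := by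
    intro e e' s t
    refine (hFLip (pa s) (pb t) _ _ _ _).trans ?_
    have h1 : |e.1 (proj (s, t)) - e'.1 (proj (s, t))| ≤ dist e.1 e'.1 := by
      rw [← Real.dist_eq]; exact ContinuousMap.dist_apply_le_dist _
    have h2 : |e.2 (proj (s, t)) - e'.2 (proj (s, t))| ≤ dist e.2 e'.2 := by
      rw [← Real.dist_eq]; exact ContinuousMap.dist_apply_le_dist _
    exact mul_le_mul_of_nonneg_left (add_le_add h1 h2) hR₁.le
  have hdistG : ∀ e e' : X, ∀ s t : ℝ,
      |μG e s t - μG e' s t| ≤ R₂ * (dist e.1 e'.1 + dist e.2 e'.2) := by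
    intro e e' s t
    refine (hGLip (pa s) (pb t) _ _ _ _).trans ?_
    have h1 : |e.1 (proj (s, t)) - e'.1 (proj (s, t))| ≤ dist e.1 e'.1 := by
      rw [← Real.dist_eq]; exact ContinuousMap.dist_apply_le_dist _
    have h2 : |e.2 (proj (s, t)) - e'.2 (proj (s, t))| ≤ dist e.2 e'.2 := by
      rw [← Real.dist_eq]; exact ContinuousMap.dist_apply_le_dist _
    exact mul_le_mul_of_nonneg_left (add_le_add h1 h2) hR₂.le
  -- component Lipschitz bounds
  have hlipF : ∀ e e' : X, dist (Φ e).1 (Φ e').1 ≤ Ξ₁ * (dist e.1 e'.1 + dist e.2 e'.2) := by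
    intro e e'
    obtain ⟨M, hM⟩ := hμFbdd e
    obtain ⟨M', hM'⟩ := hμFbdd e'
    have hnn : (0:ℝ) ≤ Ξ₁ * (dist e.1 e'.1 + dist e.2 e'.2) :=
      mul_nonneg hΞ₁pos.le (add_nonneg dist_nonneg dist_nonneg)
    rw [ContinuousMap.dist_le hnn]
    intro z
    have hz := z.2
    rw [Real.dist_eq]
    have heval : (Φ e).1 z - (Φ e').1 z =
        mixedKatInt ρ₁ ρ₂ φ₁ φ₂ (μF e) (z : ℝ × ℝ).1 (z : ℝ × ℝ).2 -
          mixedKatInt ρ₁ ρ₂ φ₁ φ₂ (μF e') (z : ℝ × ℝ).1 (z : ℝ × ℝ).2 := by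
      show h (z : ℝ × ℝ).1 (z : ℝ × ℝ).2 + _ - (h (z : ℝ × ℝ).1 (z : ℝ × ℝ).2 + _) = _
      ring
    rw [heval]
    have hbnd := mixedKat_diff_bound hρ₁ hρ₂ hφ₁p hφ₂p ha hb hz.1 hz.2
      (hμFc e) hM (hμFc e') hM'
      (mul_nonneg hR₁.le (add_nonneg dist_nonneg dist_nonneg)) (hdistF e e')
    refine hbnd.trans (le_of_eq ?_)
    rw [hΞ₁def]; ring
  have hlipG : ∀ e e' : X, dist (Φ e).2 (Φ e').2 ≤ Ξ₂ * (dist e.1 e'.1 + dist e.2 e'.2) := by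
    intro e e'
    obtain ⟨M, hM⟩ := hμGbdd e
    obtain ⟨M', hM'⟩ := hμGbdd e'
    have hnn : (0:ℝ) ≤ Ξ₂ * (dist e.1 e'.1 + dist e.2 e'.2) :=
      mul_nonneg hΞ₂pos.le (add_nonneg dist_nonneg dist_nonneg)
    rw [ContinuousMap.dist_le hnn]
    intro z
    have hz := z.2
    rw [Real.dist_eq]
    have heval : (Φ e).2 z - (Φ e').2 z =
        mixedKatInt ρ₁ ρ₂ ψ₁ ψ₂ (μG e) (z : ℝ × ℝ).1 (z : ℝ × ℝ).2 -
          mixedKatInt ρ₁ ρ₂ ψ₁ ψ₂ (μG e') (z : ℝ × ℝ).1 (z : ℝ × ℝ).2 := by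
      show g (z : ℝ × ℝ).1 (z : ℝ × ℝ).2 + _ - (g (z : ℝ × ℝ).1 (z : ℝ × ℝ).2 + _) = _
      ring
    rw [heval]
    have hbnd := mixedKat_diff_bound hρ₁ hρ₂ hψ₁p hψ₂p ha hb hz.1 hz.2
      (hμGc e) hM (hμGc e') hM'
      (mul_nonneg hR₂.le (add_nonneg dist_nonneg dist_nonneg)) (hdistG e e')
    refine hbnd.trans (le_of_eq ?_)
    rw [hΞ₂def]; ring
  -- contraction
  set q := max Ξ₁ Ξ₂ with hqdef
  have hqpos : 0 < q := lt_max_of_lt_left hΞ₁pos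
  have h2q : 2 * q < 1 := by
    have := hΞ; linarith
  have hlip : LipschitzWith (Real.toNNReal (2 * q)) Φ := by
    apply LipschitzWith.of_dist_le_mul
    intro e e'
    have hco : ((Real.toNNReal (2 * q) : ℝ≥0) : ℝ) = 2 * q := by
      rw [Real.coe_toNNReal']; exact max_eq_left (by positivity)
    rw [hco, Prod.dist_eq]
    have hd1 : dist e.1 e'.1 ≤ dist e e' := le_max_left _ _
    have hd2 : dist e.2 e'.2 ≤ dist e e' := le_max_right _ _
    have hsum : dist e.1 e'.1 + dist e.2 e'.2 ≤ 2 * dist e e' := by linarith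
    apply max_le
    · refine (hlipF e e').trans ?_
      calc Ξ₁ * (dist e.1 e'.1 + dist e.2 e'.2) ≤ q * (2 * dist e e') :=
            mul_le_mul (le_max_left _ _) hsum (add_nonneg dist_nonneg dist_nonneg) hqpos.le
        _ = 2 * q * dist e e' := by ring
    · refine (hlipG e e').trans ?_
      calc Ξ₂ * (dist e.1 e'.1 + dist e.2 e'.2) ≤ q * (2 * dist e e') :=
            mul_le_mul (le_max_right _ _) hsum (add_nonneg dist_nonneg dist_nonneg) hqpos.le
        _ = 2 * q * dist e e' := by ring
  have hcontr : ContractingWith (Real.toNNReal (2 * q)) Φ := by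
    refine ⟨?_, hlip⟩
    have : ((Real.toNNReal (2 * q) : ℝ≥0) : ℝ) < 1 := by
      rw [Real.coe_toNNReal']; rw [max_eq_left (by positivity)]; linarith
    exact_mod_cast this
  haveI : Nonempty X := ⟨(0, 0)⟩
  set fp := ContractingWith.fixedPoint Φ hcontr with hfpdef
  have hfix : Function.IsFixedPt Φ fp := hcontr.fixedPoint_isFixedPt
  refine ⟨fun x y => fp.1 (proj (x, y)), fun x y => fp.2 (proj (x, y)), ⟨?_, ?_, ?_⟩, ?_⟩
  · exact (fp.1.continuous.comp hprojc).continuousOn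
  · exact (fp.2.continuous.comp hprojc).continuousOn
  · intro x hx y hy
    have hzmem : ((x, y) : ℝ × ℝ) ∈ Ω := ⟨hx, hy⟩
    have hzp : proj (x, y) = (⟨(x, y), hzmem⟩ : ↥Ω) := Subtype.ext (hproj_id _ hzmem)
    have hfz1 : fp.1 ⟨(x, y), hzmem⟩ =
        h x y + mixedKatInt ρ₁ ρ₂ φ₁ φ₂ (μF fp) x y := by
      conv_lhs => rw [← hfix]
      rfl
    have hfz2 : fp.2 ⟨(x, y), hzmem⟩ =
        g x y + mixedKatInt ρ₁ ρ₂ ψ₁ ψ₂ (μG fp) x y := by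
      conv_lhs => rw [← hfix]
      rfl
    constructor
    · show fp.1 (proj (x, y)) = h x y + mixedKatInt ρ₁ ρ₂ φ₁ φ₂
        (fun s t => F s t (fp.1 (proj (s, t))) (fp.2 (proj (s, t)))) x y
      rw [hzp, hfz1]
      congr 1
      apply mixedKat_congr hx.1 hx.2 hy.1 hy.2
      intro s hs t ht
      show F (pa s) (pb t) (fp.1 (proj (s, t))) (fp.2 (proj (s, t))) = _
      rw [hpa_id s hs, hpb_id t ht]
    · show fp.2 (proj (x, y)) = g x y + mixedKatInt ρ₁ ρ₂ ψ₁ ψ₂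
        (fun s t => G s t (fp.1 (proj (s, t))) (fp.2 (proj (s, t)))) x y
      rw [hzp, hfz2]
      congr 1
      apply mixedKat_congr hx.1 hx.2 hy.1 hy.2
      intro s hs t ht
      show G (pa s) (pb t) (fp.1 (proj (s, t))) (fp.2 (proj (s, t))) = _
      rw [hpa_id s hs, hpb_id t ht]
  · rintro υ' ω' ⟨hc1, hc2, heq⟩ x hx y hy
    set u' : C(↥Ω, ℝ) := ⟨Ω.restrict (fun p : ℝ × ℝ => υ' p.1 p.2), hc1.restrict⟩ with hu'def
    set w' : C(↥Ω, ℝ) := ⟨Ω.restrict (fun p : ℝ × ℝ => ω' p.1 p.2), hc2.restrict⟩ with hw'def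
    have hfixuw : Φ (u', w') = (u', w') := by
      refine Prod.ext ?_ ?_
      · apply ContinuousMap.ext
        rintro ⟨⟨x', y'⟩, hz⟩
        show h x' y' + mixedKatInt ρ₁ ρ₂ φ₁ φ₂ (μF (u', w')) x' y' = υ' x' y'
        rw [(heq x' hz.1 y' hz.2).1]
        congr 1
        apply mixedKat_congr hz.1.1 hz.1.2 hz.2.1 hz.2.2
        intro s hs t ht
        show F (pa s) (pb t) (υ' (pa s) (pb t)) (ω' (pa s) (pb t)) = _
        rw [hpa_id s hs, hpb_id t ht]
      · apply ContinuousMap.ext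
        rintro ⟨⟨x', y'⟩, hz⟩
        show g x' y' + mixedKatInt ρ₁ ρ₂ ψ₁ ψ₂ (μG (u', w')) x' y' = ω' x' y'
        rw [(heq x' hz.1 y' hz.2).2]
        congr 1
        apply mixedKat_congr hz.1.1 hz.1.2 hz.2.1 hz.2.2
        intro s hs t ht
        show G (pa s) (pb t) (υ' (pa s) (pb t)) (ω' (pa s) (pb t)) = _
        rw [hpa_id s hs, hpb_id t ht]
    have huw : (u', w') = fp := hcontr.fixedPoint_unique hfixuw
    have hzmem : ((x, y) : ℝ × ℝ) ∈ Ω := ⟨hx, hy⟩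
    have hzp : proj (x, y) = (⟨(x, y), hzmem⟩ : ↥Ω) := Subtype.ext (hproj_id _ hzmem)
    have h1 : u' = fp.1 := congrArg Prod.fst huw
    have h2 : w' = fp.2 := congrArg Prod.snd huw
    constructor
    · show υ' x y = fp.1 (proj (x, y))
      rw [hzp, ← h1]
      rfl
    · show ω' x y = fp.2 (proj (x, y))
      rw [hzp, ← h2]
      rfl
end

section
/- Let ρ₁,ρ₂>0, φ₁,φ₂∈(0,1), and let F : [0,a]×[0,b]×ℝ → ℝ be continuous. If υₙ → υ uniformly on [0,a]×[0,b] with all υₙ and υ taking values in a fixed compact interval, then A(υₙ) → A(υ) uniformly, where A(w)(x,y) = (ρ₁^{1-φ₁} ρ₂^{1-φ₂})/(Γ(φ₁)Γ(φ₂)) ∫_0^x ∫_0^y s^{ρ₁-1} t^{ρ₂-1} (x^{ρ₁}-s^{ρ₁})^{φ₁-1} (y^{ρ₂}-t^{ρ₂})^{φ₂-1} F(s,t,w(s,t)) dt ds. -/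
/-! The operator is linear in `μ` and its kernel factorises into one-variable kernels
`t ^ (ρ - 1) * (y ^ ρ - t ^ ρ) ^ (φ - 1)`, each the derivative of `-(y ^ ρ - t ^ ρ) ^ φ / (ρ * φ)`
and hence of integral `y ^ (ρ * φ) / (ρ * φ)` over `[0, y]`. So on `[0, a] × [0, b]` the difference
of two images is bounded by a fixed constant times the supremum of the difference of the
arguments, and it suffices that `F (s, t, υₙ (s, t)) → F (s, t, υ (s, t))` uniformly: this follows
from the uniform continuity of `F` on the compact set `[0, a] × [0, b] × [c, d]`. -/

open Real MeasureTheory Filter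

open Set

noncomputable def katugampolaKernel (ρ φ y t : ℝ) : ℝ :=
  t ^ (ρ - 1) * (y ^ ρ - t ^ ρ) ^ (φ - 1)

section Kernel

variable {ρ φ y : ℝ}

lemma katugampolaKernel_nonneg (hρ : 0 ≤ ρ) {t : ℝ} (ht : t ∈ Icc 0 y) :
    0 ≤ katugampolaKernel ρ φ y t :=
  mul_nonneg (rpow_nonneg ht.1 _) (rpow_nonneg (sub_nonneg.2 (rpow_le_rpow ht.1 ht.2 hρ)) _)

@[fun_prop]
lemma measurable_katugampolaKernel : Measurable (katugampolaKernel ρ φ y) := by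
  unfold katugampolaKernel
  fun_prop

lemma hasDerivAt_katugampolaKernel_antideriv (hρ : 0 < ρ) (hφ : 0 < φ) {t : ℝ}
    (ht : t ∈ Ioo 0 y) :
    HasDerivAt (fun t ↦ -(y ^ ρ - t ^ ρ) ^ φ / (ρ * φ)) (katugampolaKernel ρ φ y t) t := by
  have hbase : 0 < y ^ ρ - t ^ ρ := sub_pos.2 (rpow_lt_rpow ht.1.le ht.2 hρ)
  refine ((((hasDerivAt_rpow_const (Or.inl ht.1.ne')).const_sub (y ^ ρ)).rpow_const
    (p := φ) (Or.inl hbase.ne')).neg.div_const (ρ * φ)).congr_deriv ?_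
  rw [katugampolaKernel]
  field_simp

lemma continuousOn_katugampolaKernel_antideriv (hρ : 0 < ρ) (hφ : 0 < φ) :
    ContinuousOn (fun t ↦ -(y ^ ρ - t ^ ρ) ^ φ / (ρ * φ)) (Icc 0 y) :=
  ((continuousOn_const.sub (continuousOn_id.rpow_const fun _ _ ↦ Or.inr hρ.le)).rpow_const
    fun _ _ ↦ Or.inr hφ.le).neg.div_const _

lemma integrableOn_katugampolaKernel (hρ : 0 < ρ) (hφ : 0 < φ) :
    IntegrableOn (katugampolaKernel ρ φ y) (Ioc 0 y) :=
  intervalIntegral.integrableOn_deriv_of_nonneg (continuousOn_katugampolaKernel_antideriv hρ hφ)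
    (fun _ ↦ hasDerivAt_katugampolaKernel_antideriv hρ hφ)
    (fun _ ht ↦ katugampolaKernel_nonneg hρ.le (Ioo_subset_Icc_self ht))

lemma integral_katugampolaKernel (hρ : 0 < ρ) (hφ : 0 < φ) (hy : 0 ≤ y) :
    ∫ t in Ioc 0 y, katugampolaKernel ρ φ y t = y ^ (ρ * φ) / (ρ * φ) := by
  rw [← intervalIntegral.integral_of_le hy, intervalIntegral.integral_eq_sub_of_hasDerivAt_of_le
    hy (continuousOn_katugampolaKernel_antideriv hρ hφ)
    (fun _ ↦ hasDerivAt_katugampolaKernel_antideriv hρ hφ)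
    ((intervalIntegrable_iff_integrableOn_Ioc_of_le hy).2 (integrableOn_katugampolaKernel hρ hφ))]
  rw [sub_self, zero_rpow hφ.ne', zero_rpow hρ.ne', sub_zero, rpow_mul hy]
  ring

end Kernel

section MixedIntegral

variable {ρ₁ ρ₂ φ₁ φ₂ x y : ℝ}

lemma katugampolaKernel_mul_nonneg (hρ₁ : 0 ≤ ρ₁) (hρ₂ : 0 ≤ ρ₂) {p : ℝ × ℝ}
    (hp : p ∈ Icc 0 x ×ˢ Icc 0 y) :
    0 ≤ katugampolaKernel ρ₁ φ₁ x p.1 * katugampolaKernel ρ₂ φ₂ y p.2 :=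
  mul_nonneg (katugampolaKernel_nonneg hρ₁ hp.1) (katugampolaKernel_nonneg hρ₂ hp.2)

lemma integrableOn_katugampolaKernel_prod (hρ₁ : 0 < ρ₁) (hρ₂ : 0 < ρ₂) (hφ₁ : 0 < φ₁)
    (hφ₂ : 0 < φ₂) :
    IntegrableOn (fun p : ℝ × ℝ ↦ katugampolaKernel ρ₁ φ₁ x p.1 * katugampolaKernel ρ₂ φ₂ y p.2)
      (Ioc 0 x ×ˢ Ioc 0 y) := by
  rw [IntegrableOn, Measure.volume_eq_prod, ← Measure.prod_restrict]
  exact (integrableOn_katugampolaKernel hρ₁ hφ₁).mul_prod (integrableOn_katugampolaKernel hρ₂ hφ₂)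

lemma integrableOn_katugampolaKernel_prod_mul (hρ₁ : 0 < ρ₁) (hρ₂ : 0 < ρ₂) (hφ₁ : 0 < φ₁)
    (hφ₂ : 0 < φ₂) {μ : ℝ → ℝ → ℝ}
    (hμ : ContinuousOn (fun p : ℝ × ℝ ↦ μ p.1 p.2) (Icc 0 x ×ˢ Icc 0 y)) :
    IntegrableOn (fun p : ℝ × ℝ ↦
      katugampolaKernel ρ₁ φ₁ x p.1 * katugampolaKernel ρ₂ φ₂ y p.2 * μ p.1 p.2)
      (Ioc 0 x ×ˢ Ioc 0 y) := by
  obtain ⟨M, hM⟩ := (isCompact_Icc.prod isCompact_Icc).exists_bound_of_continuousOn hμ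
  have hsub : Ioc 0 x ×ˢ Ioc 0 y ⊆ Icc 0 x ×ˢ Icc 0 y :=
    prod_mono Ioc_subset_Icc_self Ioc_subset_Icc_self
  refine ((integrableOn_katugampolaKernel_prod hρ₁ hρ₂ hφ₁ hφ₂).mul_const M).mono' ?_ ?_
  · exact (by fun_prop : Measurable fun p : ℝ × ℝ ↦
      katugampolaKernel ρ₁ φ₁ x p.1 * katugampolaKernel ρ₂ φ₂ y p.2).aestronglyMeasurable.mul
      ((hμ.aestronglyMeasurable (measurableSet_Icc.prod measurableSet_Icc)).mono_set hsub)
  · refine ae_restrict_of_forall_mem (measurableSet_Ioc.prod measurableSet_Ioc) fun p hp ↦ ?_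
    have hk := katugampolaKernel_mul_nonneg (φ₁ := φ₁) (φ₂ := φ₂) hρ₁.le hρ₂.le (hsub hp)
    rw [norm_mul, Real.norm_of_nonneg hk]
    exact mul_le_mul_of_nonneg_left (hM p (hsub hp)) hk

lemma mixedKatInt_eq_setIntegral_prod (hx : 0 ≤ x) (hy : 0 ≤ y) {μ : ℝ → ℝ → ℝ}
    (hμ : IntegrableOn (fun p : ℝ × ℝ ↦
      katugampolaKernel ρ₁ φ₁ x p.1 * katugampolaKernel ρ₂ φ₂ y p.2 * μ p.1 p.2)
      (Ioc 0 x ×ˢ Ioc 0 y)) :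
    mixedKatInt ρ₁ ρ₂ φ₁ φ₂ μ x y =
      ρ₁ ^ (1 - φ₁) * ρ₂ ^ (1 - φ₂) / (Gamma φ₁ * Gamma φ₂) *
        ∫ p in Ioc 0 x ×ˢ Ioc 0 y,
          katugampolaKernel ρ₁ φ₁ x p.1 * katugampolaKernel ρ₂ φ₂ y p.2 * μ p.1 p.2 := by
  rw [Measure.volume_eq_prod, setIntegral_prod _ hμ, mixedKatInt,
    intervalIntegral.integral_of_le hx]
  congr 1
  refine setIntegral_congr_fun measurableSet_Ioc fun s _ ↦ ?_
  rw [intervalIntegral.integral_of_le hy]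
  congr 1 with t
  simp only [katugampolaKernel]
  ring

lemma abs_mixedKatInt_sub_le (hρ₁ : 0 < ρ₁) (hρ₂ : 0 < ρ₂) (hφ₁ : 0 < φ₁) (hφ₂ : 0 < φ₂)
    (hx : 0 ≤ x) (hy : 0 ≤ y) {μ μ' : ℝ → ℝ → ℝ} {δ : ℝ}
    (hμ : ContinuousOn (fun p : ℝ × ℝ ↦ μ p.1 p.2) (Icc 0 x ×ˢ Icc 0 y))
    (hμ' : ContinuousOn (fun p : ℝ × ℝ ↦ μ' p.1 p.2) (Icc 0 x ×ˢ Icc 0 y))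
    (hδ : ∀ p ∈ Icc 0 x ×ˢ Icc 0 y, |μ p.1 p.2 - μ' p.1 p.2| ≤ δ) :
    |mixedKatInt ρ₁ ρ₂ φ₁ φ₂ μ x y - mixedKatInt ρ₁ ρ₂ φ₁ φ₂ μ' x y| ≤
      |ρ₁ ^ (1 - φ₁) * ρ₂ ^ (1 - φ₂) / (Gamma φ₁ * Gamma φ₂)| *
        (δ * (x ^ (ρ₁ * φ₁) / (ρ₁ * φ₁) * (y ^ (ρ₂ * φ₂) / (ρ₂ * φ₂)))) := by
  have hint := integrableOn_katugampolaKernel_prod_mul hρ₁ hρ₂ hφ₁ hφ₂ hμ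
  have hint' := integrableOn_katugampolaKernel_prod_mul hρ₁ hρ₂ hφ₁ hφ₂ hμ'
  rw [mixedKatInt_eq_setIntegral_prod hx hy hint, mixedKatInt_eq_setIntegral_prod hx hy hint',
    ← mul_sub, ← integral_sub hint hint', abs_mul]
  gcongr
  have hsub : Ioc 0 x ×ˢ Ioc 0 y ⊆ Icc 0 x ×ˢ Icc 0 y :=
    prod_mono Ioc_subset_Icc_self Ioc_subset_Icc_self
  calc |∫ p in Ioc 0 x ×ˢ Ioc 0 y,
          (katugampolaKernel ρ₁ φ₁ x p.1 * katugampolaKernel ρ₂ φ₂ y p.2 * μ p.1 p.2 -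
            katugampolaKernel ρ₁ φ₁ x p.1 * katugampolaKernel ρ₂ φ₂ y p.2 * μ' p.1 p.2)|
    _ ≤ ∫ p in Ioc 0 x ×ˢ Ioc 0 y,
        katugampolaKernel ρ₁ φ₁ x p.1 * katugampolaKernel ρ₂ φ₂ y p.2 * δ := by
        rw [← Real.norm_eq_abs]
        refine norm_integral_le_of_norm_le
          ((integrableOn_katugampolaKernel_prod hρ₁ hρ₂ hφ₁ hφ₂).mul_const δ)
          (ae_restrict_of_forall_mem (measurableSet_Ioc.prod measurableSet_Ioc) fun p hp ↦ ?_)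
        have hk := katugampolaKernel_mul_nonneg (φ₁ := φ₁) (φ₂ := φ₂) hρ₁.le hρ₂.le (hsub hp)
        rw [← mul_sub, norm_mul, Real.norm_of_nonneg hk]
        exact mul_le_mul_of_nonneg_left (hδ p (hsub hp)) hk
    _ = δ * (x ^ (ρ₁ * φ₁) / (ρ₁ * φ₁) * (y ^ (ρ₂ * φ₂) / (ρ₂ * φ₂))) := by
        rw [integral_mul_const, Measure.volume_eq_prod, setIntegral_prod_mul,
          integral_katugampolaKernel hρ₁ hφ₁ hx, integral_katugampolaKernel hρ₂ hφ₂ hy]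
        ring

end MixedIntegral

lemma tendstoUniformlyOn_mixedKatInt {ι : Type*} {l : Filter ι} {ρ₁ ρ₂ φ₁ φ₂ a b : ℝ}
    (hρ₁ : 0 < ρ₁) (hρ₂ : 0 < ρ₂) (hφ₁ : 0 < φ₁) (hφ₂ : 0 < φ₂)
    {μ : ι → ℝ → ℝ → ℝ} {ν : ℝ → ℝ → ℝ}
    (hμ : ∀ i, ContinuousOn (fun p : ℝ × ℝ ↦ μ i p.1 p.2) (Icc 0 a ×ˢ Icc 0 b))
    (hν : ContinuousOn (fun p : ℝ × ℝ ↦ ν p.1 p.2) (Icc 0 a ×ˢ Icc 0 b))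
    (h : TendstoUniformlyOn (fun i (p : ℝ × ℝ) ↦ μ i p.1 p.2) (fun p ↦ ν p.1 p.2) l
      (Icc 0 a ×ˢ Icc 0 b)) :
    TendstoUniformlyOn (fun i (p : ℝ × ℝ) ↦ mixedKatInt ρ₁ ρ₂ φ₁ φ₂ (μ i) p.1 p.2)
      (fun p ↦ mixedKatInt ρ₁ ρ₂ φ₁ φ₂ ν p.1 p.2) l (Icc 0 a ×ˢ Icc 0 b) := by
  set c := |ρ₁ ^ (1 - φ₁) * ρ₂ ^ (1 - φ₂) / (Gamma φ₁ * Gamma φ₂)|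
  rw [Metric.tendstoUniformlyOn_iff] at h ⊢
  intro ε hε
  obtain ⟨δ, hδ, hδε⟩ :=
    exists_pos_mul_lt hε (c * (a ^ (ρ₁ * φ₁) / (ρ₁ * φ₁) * (b ^ (ρ₂ * φ₂) / (ρ₂ * φ₂))))
  filter_upwards [h δ hδ] with i hi p ⟨⟨hx, hxa⟩, hy, hyb⟩
  have hsub : Icc 0 p.1 ×ˢ Icc 0 p.2 ⊆ Icc 0 a ×ˢ Icc 0 b :=
    prod_mono (Icc_subset_Icc_right hxa) (Icc_subset_Icc_right hyb)
  have ha : 0 ≤ a := hx.trans hxa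
  have hb : 0 ≤ b := hy.trans hyb
  calc dist (mixedKatInt ρ₁ ρ₂ φ₁ φ₂ ν p.1 p.2) (mixedKatInt ρ₁ ρ₂ φ₁ φ₂ (μ i) p.1 p.2)
      ≤ c * (δ * (p.1 ^ (ρ₁ * φ₁) / (ρ₁ * φ₁) * (p.2 ^ (ρ₂ * φ₂) / (ρ₂ * φ₂)))) :=
        abs_mixedKatInt_sub_le hρ₁ hρ₂ hφ₁ hφ₂ hx hy (hν.mono hsub) ((hμ i).mono hsub)
          fun q hq ↦ (hi q (hsub hq)).le
    _ ≤ c * (δ * (a ^ (ρ₁ * φ₁) / (ρ₁ * φ₁) * (b ^ (ρ₂ * φ₂) / (ρ₂ * φ₂)))) := by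
        gcongr
    _ < ε := by linarith

lemma TendstoUniformlyOn.graph {ι α β : Type*} [PseudoMetricSpace α] [PseudoMetricSpace β]
    {l : Filter ι} {s : Set α} {F : ι → α → β} {f : α → β} (h : TendstoUniformlyOn F f l s) :
    TendstoUniformlyOn (fun i x ↦ (x, F i x)) (fun x ↦ (x, f x)) l s := by
  rw [Metric.tendstoUniformlyOn_iff] at h ⊢
  intro ε hε
  filter_upwards [h ε hε] with i hi x hx
  simpa [Prod.dist_eq, hε] using hi x hx

theorem operator_continuous_uniform_limit (ρ₁ ρ₂ φ₁ φ₂ a b c d : ℝ)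
    (hρ₁ : 0 < ρ₁) (hρ₂ : 0 < ρ₂)
    (hφ₁ : φ₁ ∈ Set.Ioo (0:ℝ) 1) (hφ₂ : φ₂ ∈ Set.Ioo (0:ℝ) 1)
    (F : ℝ → ℝ → ℝ → ℝ)
    (hF : Continuous (fun p : ℝ × ℝ × ℝ => F p.1 p.2.1 p.2.2))
    (υn : ℕ → ℝ → ℝ → ℝ) (υ : ℝ → ℝ → ℝ)
    (hcont : ∀ n, ContinuousOn (fun p : ℝ × ℝ => υn n p.1 p.2)
      (Set.Icc 0 a ×ˢ Set.Icc 0 b))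
    (hcontlim : ContinuousOn (fun p : ℝ × ℝ => υ p.1 p.2) (Set.Icc 0 a ×ˢ Set.Icc 0 b))
    (hrange : ∀ n, ∀ x ∈ Set.Icc (0:ℝ) a, ∀ y ∈ Set.Icc (0:ℝ) b,
      υn n x y ∈ Set.Icc c d)
    (hrangelim : ∀ x ∈ Set.Icc (0:ℝ) a, ∀ y ∈ Set.Icc (0:ℝ) b, υ x y ∈ Set.Icc c d)
    (hunif : TendstoUniformlyOn (fun n (p : ℝ × ℝ) => υn n p.1 p.2)
      (fun p : ℝ × ℝ => υ p.1 p.2) atTop (Set.Icc 0 a ×ˢ Set.Icc 0 b)) :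
    TendstoUniformlyOn
      (fun n (p : ℝ × ℝ) =>
        mixedKatInt ρ₁ ρ₂ φ₁ φ₂ (fun s t => F s t (υn n s t)) p.1 p.2)
      (fun p : ℝ × ℝ =>
        mixedKatInt ρ₁ ρ₂ φ₁ φ₂ (fun s t => F s t (υ s t)) p.1 p.2)
      atTop (Set.Icc 0 a ×ˢ Set.Icc 0 b) := by
  have hFu : UniformContinuousOn (fun q : (ℝ × ℝ) × ℝ ↦ F q.1.1 q.1.2 q.2)
      ((Icc 0 a ×ˢ Icc 0 b) ×ˢ Icc c d) :=
    ((isCompact_Icc.prod isCompact_Icc).prod isCompact_Icc).uniformContinuousOn_of_continuous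
      (hF.comp (f := fun q : (ℝ × ℝ) × ℝ ↦ (q.1.1, q.1.2, q.2)) (by fun_prop)).continuousOn
  have hFυ : TendstoUniformlyOn (fun n (p : ℝ × ℝ) ↦ F p.1 p.2 (υn n p.1 p.2))
      (fun p ↦ F p.1 p.2 (υ p.1 p.2)) atTop (Icc 0 a ×ˢ Icc 0 b) :=
    hFu.comp_tendstoUniformlyOn_eventually
      (Eventually.of_forall fun n p hp ↦ mk_mem_prod hp (hrange n p.1 hp.1 p.2 hp.2))
      (fun p hp ↦ mk_mem_prod hp (hrangelim p.1 hp.1 p.2 hp.2)) hunif.graph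
  exact tendstoUniformlyOn_mixedKatInt hρ₁ hρ₂ hφ₁.1 hφ₂.1
    (fun n ↦ hF.comp_continuousOn (continuousOn_fst.prodMk (continuousOn_snd.prodMk (hcont n))))
    (hF.comp_continuousOn (continuousOn_fst.prodMk (continuousOn_snd.prodMk hcontlim))) hFυ
end
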